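/- arXiv:1712.10149 — 9 statements merged into one kernel-verified Lean document; each statement's English description precedes it below -/
import Mathlib

section
/- For every r > 0 and every s ∈ ℝ, the principal-series spherical function value given by the integral formula satisfies |(√2/π) · r · ∫₀¹ cos(s·r·x)/√(cosh r − cosh(r·x)) dx| ≤ (r + 1)·e^{−r/2}. (Harish-Chandra bound: the L²-spectrum of the distance-r averaging operator A_r on the hyperbolic plane is bounded by (r+1)e^{−r/2}.) -/
open Real Set MeasureTheory

/-!
Since `sinh` is convex on `[0, ∞)` and vanishes at `0`, `sinh (x u) ≤ x sinh u` for
`x ∈ [0, 1]`; with `cosh t - 1 = 2 sinh² (t / 2)` this gives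
`cosh r - cosh (r x) ≥ (cosh r - 1)(1 - x²)`. Bounding the cosine by `1`, the integral is at
most `(cosh r - 1)^{-1/2} ∫₀¹ (1 - x²)^{-1/2} dx = π / (2 √2 sinh (r / 2))`, so the spherical
function is at most `r / (2 sinh (r / 2)) = r e^{-r/2} / (1 - e^{-r})`, which is at most
`(r + 1) e^{-r/2}` because `(r + 1) e^{-r} ≤ 1`.
-/

lemma Real.convexOn_sinh : ConvexOn ℝ (Ici 0) sinh := by
  refine MonotoneOn.convexOn_of_deriv (convex_Ici 0) continuous_sinh.continuousOn
    differentiable_sinh.differentiableOn ?_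
  rw [deriv_sinh]
  exact cosh_strictMonoOn.monotoneOn.mono interior_subset

lemma Real.sinh_mul_le_mul_sinh {x u : ℝ} (hx₀ : 0 ≤ x) (hx₁ : x ≤ 1) (hu : 0 ≤ u) :
    sinh (x * u) ≤ x * sinh u := by
  simpa using convexOn_sinh.2 (mem_Ici.2 hu) (mem_Ici.2 le_rfl) hx₀ (sub_nonneg.2 hx₁)
    (add_sub_cancel x 1)

lemma Real.cosh_sub_one_eq (t : ℝ) : cosh t - 1 = 2 * sinh (t / 2) ^ 2 := by
  have h := cosh_two_mul (t / 2)
  rw [cosh_sq, mul_div_cancel₀ t two_ne_zero] at h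
  linarith

lemma Real.cosh_mul_sub_one_le {x : ℝ} (hx₀ : 0 ≤ x) (hx₁ : x ≤ 1) (u : ℝ) :
    cosh (x * u) - 1 ≤ x ^ 2 * (cosh u - 1) := by
  have hs : sinh (x * (|u| / 2)) ≤ x * sinh (|u| / 2) :=
    sinh_mul_le_mul_sinh hx₀ hx₁ (by positivity)
  have hs₀ : 0 ≤ sinh (x * (|u| / 2)) := sinh_nonneg_iff.2 (by positivity)
  rw [← cosh_abs u, ← cosh_abs (x * u), abs_mul, abs_of_nonneg hx₀, cosh_sub_one_eq,
    cosh_sub_one_eq, mul_div_assoc]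
  nlinarith [pow_le_pow_left₀ hs₀ hs 2]

lemma intervalIntegrable_one_div_sqrt_one_sub_sq {a b : ℝ} (ha : -1 ≤ a) (hab : a ≤ b)
    (hb : b ≤ 1) : IntervalIntegrable (fun x ↦ 1 / √(1 - x ^ 2)) volume a b := by
  refine intervalIntegral.intervalIntegrable_deriv_of_nonneg continuous_arcsin.continuousOn ?_
    (fun x _ ↦ by positivity)
  rw [min_eq_left hab, max_eq_right hab]
  exact fun x hx ↦ hasDerivAt_arcsin (by linarith [hx.1]) (by linarith [hx.2])

lemma integral_one_div_sqrt_one_sub_sq {a b : ℝ} (ha : -1 ≤ a) (hab : a ≤ b) (hb : b ≤ 1) :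
    ∫ x in a..b, 1 / √(1 - x ^ 2) = arcsin b - arcsin a :=
  intervalIntegral.integral_eq_sub_of_hasDerivAt_of_le hab continuous_arcsin.continuousOn
    (fun x hx ↦ hasDerivAt_arcsin (by linarith [hx.1]) (by linarith [hx.2]))
    (intervalIntegrable_one_div_sqrt_one_sub_sq ha hab hb)

lemma abs_integral_div_sqrt_le {f D : ℝ → ℝ} {c : ℝ} (hc : 0 < c)
    (hf : ∀ x ∈ Ioo (0 : ℝ) 1, |f x| ≤ 1) (hD : ∀ x ∈ Ioo (0 : ℝ) 1, c * (1 - x ^ 2) ≤ D x) :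
    |∫ x in (0 : ℝ)..1, f x / √(D x)| ≤ π / (2 * √c) := by
  have hbound :
      ∀ᵐ x, x ∈ Ioc (0 : ℝ) 1 → ‖f x / √(D x)‖ ≤ 1 / √c * (1 / √(1 - x ^ 2)) := by
    filter_upwards [Measure.ae_ne volume 1] with x hx₁ hx
    have hx' : x ∈ Ioo (0 : ℝ) 1 := ⟨hx.1, lt_of_le_of_ne hx.2 hx₁⟩
    have hpos : 0 < c * (1 - x ^ 2) := mul_pos hc (by nlinarith [hx'.1, hx'.2])
    calc ‖f x / √(D x)‖ = |f x| / √(D x) := by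
          rw [norm_div, norm_of_nonneg (sqrt_nonneg _), norm_eq_abs]
      _ ≤ 1 / √(c * (1 - x ^ 2)) :=
        div_le_div₀ zero_le_one (hf x hx') (sqrt_pos.2 hpos) (sqrt_le_sqrt (hD x hx'))
      _ = 1 / √c * (1 / √(1 - x ^ 2)) := by rw [sqrt_mul hc.le, one_div_mul_one_div]
  have hint := intervalIntegrable_one_div_sqrt_one_sub_sq (by norm_num) zero_le_one le_rfl
  calc |∫ x in (0 : ℝ)..1, f x / √(D x)|
      ≤ ∫ x in (0 : ℝ)..1, 1 / √c * (1 / √(1 - x ^ 2)) :=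
        intervalIntegral.norm_integral_le_of_norm_le zero_le_one hbound (hint.const_mul _)
    _ = π / (2 * √c) := by
      rw [intervalIntegral.integral_const_mul, integral_one_div_sqrt_one_sub_sq (by norm_num)
        zero_le_one le_rfl, arcsin_one, arcsin_zero]
      ring

lemma Real.add_one_mul_exp_neg_le_one (r : ℝ) : (r + 1) * exp (-r) ≤ 1 :=
  calc (r + 1) * exp (-r) ≤ exp r * exp (-r) := by gcongr; exact add_one_le_exp r
    _ = 1 := by rw [← exp_add, add_neg_cancel, exp_zero]

lemma Real.div_two_sinh_half_le {r : ℝ} (hr : 0 < r) :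
    r / (2 * sinh (r / 2)) ≤ (r + 1) * exp (-r / 2) := by
  have hsinh : 2 * sinh (r / 2) * exp (-r / 2) = 1 - exp (-r) := by
    have e₁ : exp (r / 2) * exp (-r / 2) = 1 := by rw [← exp_add]; ring_nf; exact exp_zero
    have e₂ : exp (-(r / 2)) * exp (-r / 2) = exp (-r) := by rw [← exp_add]; ring_nf
    rw [sinh_eq]
    linear_combination e₁ - e₂
  rw [div_le_iff₀ (by have := sinh_pos_iff.2 (half_pos hr); positivity)]
  calc r ≤ (r + 1) * (1 - exp (-r)) := by linear_combination add_one_mul_exp_neg_le_one r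
    _ = (r + 1) * exp (-r / 2) * (2 * sinh (r / 2)) := by rw [← hsinh]; ring

/-- **Harish-Chandra bound.** For every `r > 0` and every `s : ℝ`, the value of the
principal-series spherical function of the hyperbolic plane at distance `r`, given by the
integral formula `(√2/π) · r · ∫₀¹ cos(s·r·x)/√(cosh r − cosh(r·x)) dx`, is bounded in
absolute value by `(r + 1)·e^{−r/2}`. -/
theorem spherical_function_principal_bound (r : ℝ) (hr : 0 < r) (s : ℝ) :
    |(Real.sqrt 2 / π) * r *
        ∫ x in (0:ℝ)..1, Real.cos (s * r * x) / Real.sqrt (Real.cosh r - Real.cosh (r * x))| ≤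
      (r + 1) * Real.exp (-r / 2) := by
  have hsinh : 0 < sinh (r / 2) := sinh_pos_iff.2 (half_pos hr)
  have hsqrt : √(cosh r - 1) = √2 * sinh (r / 2) := by
    rw [cosh_sub_one_eq, sqrt_mul zero_le_two, sqrt_sq hsinh.le]
  have hintegral := abs_integral_div_sqrt_le (f := fun x ↦ cos (s * r * x))
    (D := fun x ↦ cosh r - cosh (r * x)) (c := cosh r - 1) (by rw [cosh_sub_one_eq]; positivity)
    (fun x _ ↦ abs_cos_le_one _)
    (fun x hx ↦ by linarith [mul_comm x r ▸ cosh_mul_sub_one_le hx.1.le hx.2.le r])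
  calc _ = √2 / π * r * |∫ x in (0:ℝ)..1, cos (s * r * x) / √(cosh r - cosh (r * x))| := by
        rw [abs_mul, abs_of_nonneg (by positivity)]
    _ ≤ √2 / π * r * (π / (2 * √(cosh r - 1))) := by gcongr
    _ = r / (2 * sinh (r / 2)) := by rw [hsqrt]; field_simp
    _ ≤ (r + 1) * exp (-r / 2) := div_two_sinh_half_le hr
end

section
/- For every r ≥ 0 and every x ∈ [0,1], the inequality cosh r − cosh(r·x) ≥ (cosh r − 1)·(1 − x²) holds. -/
lemma convexOn_sinh : ConvexOn ℝ (Set.Ici 0) Real.sinh := by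
  apply convexOn_of_deriv2_nonneg (convex_Ici 0) Real.continuous_sinh.continuousOn
    Real.differentiable_sinh.differentiableOn
  · rw [Real.deriv_sinh]; exact Real.differentiable_cosh.differentiableOn
  · intro x hx
    have h2 : deriv^[2] Real.sinh = Real.sinh := by
      ext t; simp [Function.iterate_succ, Real.deriv_sinh, Real.deriv_cosh]
    rw [h2]
    exact Real.sinh_nonneg_iff.mpr (le_of_lt (by simpa [interior_Ici] using hx))

lemma sinh_mul_le (t : ℝ) (ht : 0 ≤ t) (x : ℝ) (hx0 : 0 ≤ x) (hx1 : x ≤ 1) :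
    Real.sinh (x * t) ≤ x * Real.sinh t := by
  have h := convexOn_sinh.2 (Set.mem_Ici.mpr ht) (Set.mem_Ici.mpr le_rfl)
    hx0 (by linarith : (0:ℝ) ≤ 1 - x) (by ring)
  simpa using h

/-- For every `r ≥ 0` and every `x ∈ [0,1]`, one has
`cosh r − cosh(r·x) ≥ (cosh r − 1)·(1 − x²)`. -/
theorem cosh_sub_cosh_ge (r : ℝ) (hr : 0 ≤ r) (x : ℝ) (hx : x ∈ Set.Icc (0:ℝ) 1) :
    (Real.cosh r - 1) * (1 - x ^ 2) ≤ Real.cosh r - Real.cosh (r * x) := by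
  obtain ⟨hx0, hx1⟩ := hx
  have key : ∀ t : ℝ, Real.cosh t = 2 * Real.sinh (t / 2) ^ 2 + 1 := by
    intro t
    have := Real.cosh_two_mul (t / 2)
    have h2 := Real.cosh_sq (t / 2)
    rw [show 2 * (t/2) = t by ring] at this
    rw [this, h2]; ring
  rw [key r, key (r * x)]
  have hs : Real.sinh (r * x / 2) ≤ x * Real.sinh (r / 2) := by
    have := sinh_mul_le (r / 2) (by linarith) x hx0 hx1
    rw [show x * (r / 2) = r * x / 2 by ring] at this
    exact this
  have hs0 : 0 ≤ Real.sinh (r * x / 2) := Real.sinh_nonneg_iff.mpr (by positivity)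
  have hsq : Real.sinh (r * x / 2) ^ 2 ≤ (x * Real.sinh (r / 2)) ^ 2 :=
    pow_le_pow_left₀ hs0 hs 2
  nlinarith [Real.sinh_nonneg_iff.mpr (show (0:ℝ) ≤ r / 2 by linarith)]
end

section
/- For every r > 0 and every s′ ∈ ℝ with |s′| ≤ 1/2, the complementary-series spherical function value satisfies (1/(√2·π)) · r · ∫_{−1}^{1} e^{s′·r·x}/√(cosh r − cosh(r·x)) dx ≤ (r + 1)·e^{−r·(1/2 − |s′|)}. -/
/-!
Write `cosh r - cosh (r x) = 2 sinh a sinh b` with `a = r(1+x)/2`, `b = r(1-x)/2`. The elementary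
bound `y e^y ≤ (1 + 2y) sinh y` (equivalent to `1 + 2y ≤ e^{2y}`) together with AM-GM gives
`cosh r - cosh (r x) ≥ r² (1 - x²) e^r / (2 (1 + r)²)`. Bounding the numerator by `e^{|s'| r}`,
the integrand is at most `√2 (1 + r) e^{|s'| r - r/2} / (r √(1 - x²))`, and
`∫_{-1}^{1} (1 - x²)^{-1/2} dx = π` makes the constants come out exactly.
-/

open Real MeasureTheory Set

theorem intervalIntegral.integral_mono_of_nonneg_of_le_Ioo {f g : ℝ → ℝ} {a b : ℝ} (hab : a ≤ b)
    (hf : ∀ x ∈ Ioo a b, 0 ≤ f x) (hg : IntervalIntegrable g volume a b)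
    (hfg : ∀ x ∈ Ioo a b, f x ≤ g x) :
    ∫ x in a..b, f x ≤ ∫ x in a..b, g x := by
  simp only [intervalIntegral.integral_of_le hab, integral_Ioc_eq_integral_Ioo]
  exact integral_mono_of_nonneg ((ae_restrict_iff' measurableSet_Ioo).2 (ae_of_all _ hf))
    (hg.1.mono_set Ioo_subset_Ioc_self) ((ae_restrict_iff' measurableSet_Ioo).2 (ae_of_all _ hfg))

namespace Real

theorem mul_exp_le_one_add_two_mul_mul_sinh (y : ℝ) :
    y * exp y ≤ (1 + 2 * y) * sinh y := by
  have h : (1 + 2 * y) * exp (-y) ≤ exp y := by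
    rw [← le_div_iff₀ (exp_pos _), exp_neg, div_inv_eq_mul, ← exp_add]
    linarith [add_one_le_exp (y + y)]
  rw [sinh_eq]
  nlinarith [exp_pos (-y)]

theorem cosh_add_sub_cosh_sub (a b : ℝ) : cosh (a + b) - cosh (a - b) = 2 * sinh a * sinh b := by
  rw [cosh_add, cosh_sub]; ring

theorem mul_mul_exp_add_le_sinh_mul_sinh {a b : ℝ} (ha : 0 ≤ a) (hb : 0 ≤ b) :
    a * b * exp (a + b) ≤ (1 + a + b) ^ 2 * (sinh a * sinh b) := by
  have hsa := sinh_nonneg_iff.2 ha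
  have hsb := sinh_nonneg_iff.2 hb
  have hprod : a * exp a * (b * exp b) ≤ (1 + 2 * a) * sinh a * ((1 + 2 * b) * sinh b) :=
    mul_le_mul (mul_exp_le_one_add_two_mul_mul_sinh a) (mul_exp_le_one_add_two_mul_mul_sinh b)
      (by positivity) (by positivity)
  have hamgm : (1 + 2 * a) * (1 + 2 * b) ≤ (1 + a + b) ^ 2 := by nlinarith [sq_nonneg (a - b)]
  rw [exp_add]
  nlinarith [mul_le_mul_of_nonneg_right hamgm (mul_nonneg hsa hsb)]

theorem sq_mul_one_sub_sq_mul_exp_le_cosh_sub_cosh {r x : ℝ} (hr : 0 ≤ r) (hx : x ∈ Icc (-1) 1) :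
    r ^ 2 * (1 - x ^ 2) * exp r ≤ 2 * (1 + r) ^ 2 * (cosh r - cosh (r * x)) := by
  have key := mul_mul_exp_add_le_sinh_mul_sinh (a := r * (1 + x) / 2) (b := r * (1 - x) / 2)
    (by nlinarith [hx.1]) (by nlinarith [hx.2])
  have hsplit := cosh_add_sub_cosh_sub (r * (1 + x) / 2) (r * (1 - x) / 2)
  rw [show r * (1 + x) / 2 + r * (1 - x) / 2 = r by ring,
    show r * (1 + x) / 2 - r * (1 - x) / 2 = r * x by ring] at hsplit
  rw [show r * (1 + x) / 2 + r * (1 - x) / 2 = r by ring] at key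
  rw [hsplit]
  linear_combination 4 * key

theorem intervalIntegrable_sqrt_one_sub_sq_inv :
    IntervalIntegrable (fun x => (√(1 - x ^ 2))⁻¹) volume (-1) 1 := by
  simpa [sqrt_inv] using Polynomial.Chebyshev.intervalIntegrable_sqrt_one_sub_sq_inv

theorem integral_sqrt_one_sub_sq_inv : ∫ x in (-1)..1, (√(1 - x ^ 2))⁻¹ = π := by
  rw [intervalIntegral.integral_eq_sub_of_hasDerivAt_of_le (by norm_num)
    continuous_arcsin.continuousOn
    (fun x hx => by simpa using hasDerivAt_arcsin hx.1.ne' hx.2.ne)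
    intervalIntegrable_sqrt_one_sub_sq_inv, arcsin_one, arcsin_neg_one]
  ring

end Real

theorem exp_div_sqrt_cosh_sub_cosh_le {r s x : ℝ} (hr : 0 < r) (hx : x ∈ Ioo (-1) 1) :
    exp (s * r * x) / √(cosh r - cosh (r * x)) ≤
      √2 * (1 + r) * exp (|s| * r - r / 2) / r * (√(1 - x ^ 2))⁻¹ := by
  have hx2 : 0 < 1 - x ^ 2 := by nlinarith [hx.1, hx.2]
  set K := r * √(1 - x ^ 2) * exp (r / 2) / (√2 * (1 + r)) with hK
  have hKpos : 0 < K := by positivity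
  have hK_le : K ≤ √(cosh r - cosh (r * x)) := by
    have hKsq : K ^ 2 = r ^ 2 * (1 - x ^ 2) * exp r / (2 * (1 + r) ^ 2) := by
      rw [hK, div_pow, mul_pow, mul_pow, mul_pow, sq_sqrt hx2.le, sq_sqrt zero_le_two,
        ← exp_nat_mul]
      ring_nf
    rw [le_sqrt' hKpos, hKsq, div_le_iff₀ (by positivity)]
    linarith [sq_mul_one_sub_sq_mul_exp_le_cosh_sub_cosh hr.le (Ioo_subset_Icc_self hx)]
  have hnum : exp (s * r * x) ≤ exp (|s| * r) := by
    refine exp_le_exp.2 (calc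
      s * r * x ≤ |s * r * x| := le_abs_self _
      _ = |s| * r * |x| := by rw [abs_mul, abs_mul, abs_of_pos hr]
      _ ≤ |s| * r := mul_le_of_le_one_right (by positivity) (abs_le.2 ⟨hx.1.le, hx.2.le⟩))
  calc exp (s * r * x) / √(cosh r - cosh (r * x)) ≤ exp (|s| * r) / K :=
        div_le_div₀ (exp_pos _).le hnum hKpos hK_le
    _ = _ := by
        rw [hK, exp_sub]
        field_simp

theorem spherical_function_complementary_bound_general (r : ℝ) (hr : 0 < r) (s' : ℝ) :
    (1 / (Real.sqrt 2 * π)) * r *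
        ∫ x in (-1:ℝ)..1, Real.exp (s' * r * x) / Real.sqrt (Real.cosh r - Real.cosh (r * x)) ≤
      (r + 1) * Real.exp (-r * (1 / 2 - |s'|)) := by
  have hint : ∫ x in (-1:ℝ)..1, exp (s' * r * x) / √(cosh r - cosh (r * x)) ≤
      √2 * (1 + r) * exp (|s'| * r - r / 2) / r * π := by
    rw [← integral_sqrt_one_sub_sq_inv, ← intervalIntegral.integral_const_mul]
    exact intervalIntegral.integral_mono_of_nonneg_of_le_Ioo (by norm_num)
      (fun x _ => by positivity) (intervalIntegrable_sqrt_one_sub_sq_inv.const_mul _)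
      (fun x hx => exp_div_sqrt_cosh_sub_cosh_le hr hx)
  calc _ ≤ 1 / (√2 * π) * r * (√2 * (1 + r) * exp (|s'| * r - r / 2) / r * π) := by gcongr
    _ = (r + 1) * exp (-r * (1 / 2 - |s'|)) := by
      rw [show -r * (1 / 2 - |s'|) = |s'| * r - r / 2 by ring]
      field_simp
      ring

/-- Upper bound on the complementary-series spherical function: for `r > 0` and `|s′| ≤ 1/2`,
`(1/(√2·π)) · r · ∫_{−1}^{1} e^{s′·r·x}/√(cosh r − cosh(r·x)) dx ≤ (r+1)·e^{−r·(1/2 − |s′|)}`. -/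
theorem spherical_function_complementary_bound (r : ℝ) (hr : 0 < r) (s' : ℝ)
    (hs : |s'| ≤ 1 / 2) :
    (1 / (Real.sqrt 2 * π)) * r *
        ∫ x in (-1:ℝ)..1, Real.exp (s' * r * x) / Real.sqrt (Real.cosh r - Real.cosh (r * x)) ≤
      (r + 1) * Real.exp (-r * (1 / 2 - |s'|)) :=
  spherical_function_complementary_bound_general r hr s'
end

section
/- There exists an absolute constant c > 0 such that for every ε ∈ (0,1], every r ≥ 1 and every s′ ∈ [0, 1/2], one has (1/(√2·π)) · r · ∫_{−1}^{1} e^{s′·r·x}/√(cosh r − cosh(r·x)) dx ≥ c·√ε·e^{−r·(1/2 − s′·(1−ε))}. -/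
open Real MeasureTheory Set

/-!
For `x ∈ (1 - ε, 1)` the mean value theorem gives `cosh r - cosh (r x) ≤ ε r sinh r ≤ ε r eʳ / 2`,
while the numerator is at least `e^{s' r (1 - ε)}`; so the integral over `(1 - ε, 1)` alone is at
least `√(2ε / r) · e^{-r (1/2 - s' (1 - ε))}`, and `r ≥ 1` then gives the bound with `c = 1 / π`.
Dropping the rest of `[-1, 1]` needs integrability: convexity of `cosh` gives
`cosh r - cosh (r x) ≥ (1 - |x|) (cosh r - 1)`, so the integrand is dominated by a multiple of
`(1 - |x|) ^ (-1/2)`.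
-/

lemma cosh_sub_cosh_le_mul_sinh {a b : ℝ} (hab : a ≤ b) :
    cosh b - cosh a ≤ sinh b * (b - a) :=
  (convex_Icc a b).image_sub_le_mul_sub_of_deriv_le continuous_cosh.continuousOn
    differentiable_cosh.differentiableOn
    (fun x hx => by
      rw [Real.deriv_cosh]
      exact sinh_le_sinh.2 (interior_subset hx).2)
    a (left_mem_Icc.2 hab) b (right_mem_Icc.2 hab) hab

lemma cosh_mul_le_one_sub_add_mul_cosh (r : ℝ) {t : ℝ} (ht₀ : 0 ≤ t) (ht₁ : t ≤ 1) :
    cosh (t * r) ≤ 1 - t + t * cosh r := by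
  have key (y : ℝ) : exp (t * y) ≤ 1 - t + t * exp y := by
    simpa using convexOn_exp.2 (mem_univ 0) (mem_univ y) (sub_nonneg.2 ht₁) ht₀ (by ring)
  rw [cosh_eq, cosh_eq, ← mul_neg]
  linarith [key r, key (-r)]

lemma intervalIntegrable_one_sub_abs_rpow {p : ℝ} (hp : -1 < p) :
    IntervalIntegrable (fun x : ℝ => (1 - |x|) ^ p) volume (-1) 1 := by
  have h := intervalIntegral.intervalIntegrable_rpow' (a := 0) (b := 1) hp
  refine IntervalIntegrable.trans (b := 0) ?_ ?_
  · refine (intervalIntegrable_congr fun x hx => ?_).2 (by simpa using h.comp_add_left 1)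
    rw [uIoc_of_le (by norm_num)] at hx
    simp [abs_of_nonpos hx.2, sub_neg_eq_add]
  · refine (intervalIntegrable_congr fun x hx => ?_).2 (by simpa using (h.comp_sub_left 1).symm)
    rw [uIoc_of_le (by norm_num)] at hx
    simp [abs_of_nonneg hx.1.le]

/-- At `x = ±1` the denominator vanishes and Lean's division returns `0`. -/
noncomputable def sphericalIntegrand (s r x : ℝ) : ℝ :=
  exp (s * r * x) / √(cosh r - cosh (r * x))

lemma sphericalIntegrand_nonneg (s r x : ℝ) : 0 ≤ sphericalIntegrand s r x := by
  unfold sphericalIntegrand; positivity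

lemma sphericalIntegrand_le (s : ℝ) {r x : ℝ} (hr : 0 < r) (hx : |x| ≤ 1) :
    sphericalIntegrand s r x ≤ exp (|s| * r) / √(cosh r - 1) * (1 - |x|) ^ (-(1 / 2) : ℝ) := by
  have hcosh : cosh (r * x) = cosh (|x| * r) := by
    rw [← cosh_abs, abs_mul, abs_of_pos hr, mul_comm]
  rcases hx.eq_or_lt with hx₁ | hx₁
  · rw [sphericalIntegrand, hcosh, hx₁, one_mul, sub_self, sqrt_zero, div_zero]
    positivity
  · have hpos : 0 < (cosh r - 1) * (1 - |x|) :=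
      mul_pos (by linarith [one_lt_cosh.2 hr.ne']) (by linarith)
    have hden : (cosh r - 1) * (1 - |x|) ≤ cosh r - cosh (r * x) := by
      rw [hcosh]
      linarith [cosh_mul_le_one_sub_add_mul_cosh r (abs_nonneg x) hx]
    have hnum : exp (s * r * x) ≤ exp (|s| * r) := by
      refine exp_le_exp.2 ?_
      calc s * r * x ≤ |s * r * x| := le_abs_self _
        _ = |s| * r * |x| := by rw [abs_mul, abs_mul, abs_of_pos hr]
        _ ≤ |s| * r := mul_le_of_le_one_right (by positivity) hx
    calc sphericalIntegrand s r x ≤ exp (|s| * r) / √((cosh r - 1) * (1 - |x|)) :=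
          div_le_div₀ (by positivity) hnum (sqrt_pos.2 hpos) (sqrt_le_sqrt hden)
      _ = _ := by
          rw [rpow_neg (by linarith), ← sqrt_eq_rpow, sqrt_mul (by linarith [one_le_cosh r])]
          ring

lemma intervalIntegrable_sphericalIntegrand (s : ℝ) {r : ℝ} (hr : 0 < r) :
    IntervalIntegrable (sphericalIntegrand s r) volume (-1) 1 := by
  refine ((intervalIntegrable_one_sub_abs_rpow (p := -(1 / 2)) (by norm_num)).const_mul
    (exp (|s| * r) / √(cosh r - 1))).mono_fun' ?_ ?_
  · exact (by unfold sphericalIntegrand; fun_prop : Measurable _).aestronglyMeasurable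
  · rw [uIoc_of_le (by norm_num)]
    refine ae_restrict_of_forall_mem measurableSet_Ioc fun x hx => ?_
    dsimp only
    rw [Real.norm_of_nonneg (sphericalIntegrand_nonneg s r x)]
    exact sphericalIntegrand_le s hr (abs_le.2 ⟨hx.1.le, hx.2⟩)

lemma le_sphericalIntegrand {s r ε x : ℝ} (hs : 0 ≤ s) (hr : 0 < r) (hε : 0 < ε) (hε₁ : ε ≤ 1)
    (hx : x ∈ Ioo (1 - ε) 1) :
    2 * exp (s * r * (1 - ε) - r / 2) / √(2 * ε * r) ≤ sphericalIntegrand s r x := by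
  obtain ⟨hx₀, hx₁⟩ := hx
  have hpos : 0 < cosh r - cosh (r * x) := by
    rw [sub_pos, cosh_lt_cosh, abs_of_pos hr, abs_of_nonneg (by nlinarith)]
    nlinarith
  have hden : √(cosh r - cosh (r * x)) ≤ √(2 * ε * r) * exp (r / 2) / 2 := by
    rw [sqrt_le_left (by positivity), div_pow, mul_pow, sq_sqrt (by positivity), ← exp_nat_mul]
    calc cosh r - cosh (r * x) ≤ sinh r * (r - r * x) := cosh_sub_cosh_le_mul_sinh (by nlinarith)
      _ ≤ exp r / 2 * (ε * r) := by
          gcongr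
          · nlinarith
          · rw [sinh_eq]; linarith [exp_pos (-r)]
          · nlinarith
      _ = _ := by push_cast; ring_nf
  have hnum : exp (s * r * (1 - ε)) ≤ exp (s * r * x) :=
    exp_le_exp.2 (mul_le_mul_of_nonneg_left hx₀.le (by positivity))
  calc 2 * exp (s * r * (1 - ε) - r / 2) / √(2 * ε * r)
      = exp (s * r * (1 - ε)) / (√(2 * ε * r) * exp (r / 2) / 2) := by
        rw [exp_sub]; field_simp
    _ ≤ sphericalIntegrand s r x := div_le_div₀ (by positivity) hnum (sqrt_pos.2 hpos) hden

lemma sqrt_mul_exp_le_mul_integral_sphericalIntegrand {s r ε : ℝ} (hs : 0 ≤ s) (hr : 0 < r)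
    (hε : 0 < ε) (hε₁ : ε ≤ 1) :
    √(2 * ε * r) * exp (-r * (1 / 2 - s * (1 - ε))) ≤
      r * ∫ x in (-1)..1, sphericalIntegrand s r x := by
  have hfi := intervalIntegrable_sphericalIntegrand s hr
  have hsub : ε * (2 * exp (s * r * (1 - ε) - r / 2) / √(2 * ε * r)) ≤
      ∫ x in (1 - ε)..1, sphericalIntegrand s r x := by
    have h := intervalIntegral.integral_mono_on_of_le_Ioo (by linarith)
      intervalIntegrable_const (hfi.mono_set ?_) fun x hx => le_sphericalIntegrand hs hr hε hε₁ hx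
    · rwa [intervalIntegral.integral_const, smul_eq_mul, sub_sub_cancel] at h
    · rw [uIcc_of_le (by linarith), uIcc_of_le (by norm_num)]
      exact Icc_subset_Icc (by linarith) le_rfl
  have hsup : ∫ x in (1 - ε)..1, sphericalIntegrand s r x ≤
      ∫ x in (-1)..1, sphericalIntegrand s r x :=
    intervalIntegral.integral_mono_interval (by linarith) (by linarith) le_rfl
      (Filter.Eventually.of_forall (sphericalIntegrand_nonneg s r)) hfi
  calc √(2 * ε * r) * exp (-r * (1 / 2 - s * (1 - ε)))
      = r * (ε * (2 * exp (s * r * (1 - ε) - r / 2) / √(2 * ε * r))) := by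
        rw [show -r * (1 / 2 - s * (1 - ε)) = s * r * (1 - ε) - r / 2 by ring]
        field_simp
        rw [sq_sqrt (by positivity)]
    _ ≤ _ := by gcongr; exact hsub.trans hsup

/-- Lower bound on the complementary-series spherical function: there is an absolute `c > 0`
such that for all `ε ∈ (0,1]`, `r ≥ 1`, `s′ ∈ [0,1/2]`,
`(1/(√2·π)) · r · ∫_{−1}^{1} e^{s′·r·x}/√(cosh r − cosh(r·x)) dx ≥ c·√ε·e^{−r·(1/2 − s′(1−ε))}`. -/
theorem spherical_function_complementary_lower_bound :
    ∃ c : ℝ, 0 < c ∧ ∀ ε : ℝ, ε ∈ Set.Ioc (0:ℝ) 1 → ∀ r : ℝ, 1 ≤ r →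
      ∀ s' : ℝ, s' ∈ Set.Icc (0:ℝ) (1 / 2) →
        c * Real.sqrt ε * Real.exp (-r * (1 / 2 - s' * (1 - ε))) ≤
          (1 / (Real.sqrt 2 * π)) * r *
            ∫ x in (-1:ℝ)..1,
              Real.exp (s' * r * x) / Real.sqrt (Real.cosh r - Real.cosh (r * x)) := by
  refine ⟨1 / π, by positivity, ?_⟩
  rintro ε ⟨hε, hε₁⟩ r hr s' ⟨hs, -⟩
  have h := sqrt_mul_exp_le_mul_integral_sphericalIntegrand (r := r) hs (by linarith) hε hε₁
  have hsqrt : √(2 * ε * r) = √2 * (√ε * √r) := by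
    rw [mul_assoc, sqrt_mul (by norm_num), sqrt_mul hε.le]
  calc 1 / π * √ε * exp (-r * (1 / 2 - s' * (1 - ε)))
      ≤ 1 / π * (√ε * √r) * exp (-r * (1 / 2 - s' * (1 - ε))) := by
        gcongr; exact le_mul_of_one_le_right (sqrt_nonneg ε) (one_le_sqrt.2 hr)
    _ = 1 / (√2 * π) * (√(2 * ε * r) * exp (-r * (1 / 2 - s' * (1 - ε)))) := by
        rw [hsqrt]; field_simp
    _ ≤ 1 / (√2 * π) * r * ∫ x in (-1)..1, sphericalIntegrand s' r x := by
        rw [mul_assoc _ r]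
        exact mul_le_mul_of_nonneg_left h (by positivity)
end

section
/- For every r > 0 there exists a constant C > 0 (depending only on r) such that for every s ∈ ℝ with s ≠ 0, one has |∫₀¹ cos(s·r·x)/√(cosh r − cosh(r·x)) dx| ≤ C·|s|^{−1/2}. -/
/-!
Convexity of `cosh` gives `cosh r - cosh (r x) ≥ (1 - x) (cosh r - 1)` on `[0, 1]`, so the kernel
`(cosh r - cosh (r x))^(-1/2)` is `O((1 - x)^(-1/2))`. For `|s| > 1` split `[0, 1]` at
`a = 1 - 1/|s|`. On `[a, 1]` the majorant alone contributes `O(|s|^(-1/2))`. On `[0, a]` the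
kernel is increasing, so integrating by parts against `sin (θ x) / θ`, `θ = |s| r` (the second
mean value theorem), bounds that piece by twice its value at `a` over `θ`, i.e. by
`O(|s|^(1/2) / |s|)`.
For `|s| ≤ 1` the majorant bound on all of `[0, 1]` suffices.
-/

open Real MeasureTheory intervalIntegral Set

section SecondMeanValue

variable {g g' Φ φ : ℝ → ℝ} {a b M : ℝ}

/-- Bonnet's form of the second mean value theorem. -/
theorem abs_integral_mul_le_of_deriv_nonneg (hab : a ≤ b)
    (hg : ∀ x ∈ uIcc a b, HasDerivAt g (g' x) x) (hg' : IntervalIntegrable g' volume a b)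
    (hg'_nonneg : ∀ x ∈ Icc a b, 0 ≤ g' x) (hga : 0 ≤ g a)
    (hΦ : ∀ x ∈ uIcc a b, HasDerivAt Φ (φ x) x) (hφ : IntervalIntegrable φ volume a b)
    (hΦ_le : ∀ x ∈ Icc a b, |Φ x| ≤ M) :
    |∫ x in a..b, g x * φ x| ≤ 2 * M * g b := by
  have hFTC := integral_eq_sub_of_hasDerivAt hg hg'
  have hg_mono : g a ≤ g b := by linarith [integral_nonneg (μ := volume) hab hg'_nonneg]
  have hrem : |∫ x in a..b, g' x * Φ x| ≤ M * (g b - g a) := by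
    calc |∫ x in a..b, g' x * Φ x| ≤ ∫ x in a..b, g' x * M := by
          refine norm_integral_le_of_norm_le (f := fun x => g' x * Φ x) hab
            (ae_of_all _ fun x hx => ?_) (hg'.mul_const M)
          have hx' : x ∈ Icc a b := Ioc_subset_Icc_self hx
          rw [norm_mul, Real.norm_of_nonneg (hg'_nonneg x hx')]
          exact mul_le_mul_of_nonneg_left (hΦ_le x hx') (hg'_nonneg x hx')
      _ = M * (g b - g a) := by rw [intervalIntegral.integral_mul_const, hFTC, mul_comm]
  have hb : |g b * Φ b| ≤ g b * M := by
    rw [abs_mul, abs_of_nonneg (hga.trans hg_mono)]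
    exact mul_le_mul_of_nonneg_left (hΦ_le b ⟨hab, le_rfl⟩) (hga.trans hg_mono)
  have ha : |g a * Φ a| ≤ g a * M := by
    rw [abs_mul, abs_of_nonneg hga]
    exact mul_le_mul_of_nonneg_left (hΦ_le a ⟨le_rfl, hab⟩) hga
  rw [integral_mul_deriv_eq_deriv_mul hg hΦ hg' hφ]
  calc _ ≤ |g b * Φ b| + |g a * Φ a| + |∫ x in a..b, g' x * Φ x| :=
        (abs_sub _ _).trans (add_le_add (abs_sub _ _) le_rfl)
    _ ≤ 2 * M * g b := by linarith

theorem abs_integral_cos_mul_le_of_deriv_nonneg {θ : ℝ} (hθ : 0 < θ) (hab : a ≤ b)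
    (hg : ∀ x ∈ uIcc a b, HasDerivAt g (g' x) x) (hg' : IntervalIntegrable g' volume a b)
    (hg'_nonneg : ∀ x ∈ Icc a b, 0 ≤ g' x) (hga : 0 ≤ g a) :
    |∫ x in a..b, cos (θ * x) * g x| ≤ 2 * g b / θ := by
  have hsin : ∀ x ∈ uIcc a b, HasDerivAt (fun y => sin (θ * y) / θ) (cos (θ * x)) x := by
    intro x _
    simpa [hθ.ne'] using ((hasDerivAt_id' x).const_mul θ).sin.div_const θ
  have hsin_le : ∀ x ∈ Icc a b, |sin (θ * x) / θ| ≤ θ⁻¹ := by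
    intro x _
    rw [abs_div, abs_of_pos hθ, div_eq_mul_inv]
    exact mul_le_of_le_one_left (inv_nonneg.2 hθ.le) (abs_sin_le_one _)
  simp only [mul_comm (cos _)]
  calc _ ≤ 2 * θ⁻¹ * g b := abs_integral_mul_le_of_deriv_nonneg hab hg hg' hg'_nonneg hga hsin
        ((by fun_prop : Continuous fun x => cos (θ * x)).intervalIntegrable a b) hsin_le
    _ = 2 * g b / θ := by ring

end SecondMeanValue

section InvSqrtOneSub

theorem rpow_neg_one_half_eq_inv_sqrt {x : ℝ} (hx : 0 ≤ x) :
    x ^ (-(1:ℝ) / 2) = (√x)⁻¹ := by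
  rw [neg_div, rpow_neg hx, sqrt_eq_rpow]

variable {a : ℝ}

theorem intervalIntegrable_inv_sqrt_one_sub (ha : a ≤ 1) :
    IntervalIntegrable (fun x => (√(1 - x))⁻¹) volume a 1 := by
  have h := (intervalIntegrable_rpow' (a := 1 - a) (b := 0) (r := -(1:ℝ) / 2)
    (by norm_num)).comp_sub_left 1
  rw [sub_sub_cancel, sub_zero] at h
  refine h.congr fun x hx => ?_
  rw [uIoc_of_le ha] at hx
  exact rpow_neg_one_half_eq_inv_sqrt (by linarith [hx.2])

theorem integral_inv_sqrt_one_sub (ha : a ≤ 1) :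
    ∫ x in a..1, (√(1 - x))⁻¹ = 2 * √(1 - a) := by
  have hpow : ∫ x in a..1, (1 - x) ^ (-(1:ℝ) / 2) = 2 * √(1 - a) := by
    rw [integral_comp_sub_left (fun x => x ^ (-(1:ℝ) / 2)), integral_rpow (by norm_num),
      sub_self, sqrt_eq_rpow]
    norm_num
    ring
  rw [← hpow]
  refine integral_congr fun x hx => ?_
  rw [uIcc_of_le ha] at hx
  exact (rpow_neg_one_half_eq_inv_sqrt (by linarith [hx.2])).symm

theorem abs_integral_le_of_abs_le_inv_sqrt_one_sub {f : ℝ → ℝ} {c : ℝ} (ha : a ≤ 1)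
    (hf : ∀ x ∈ Ioc a 1, |f x| ≤ c * (√(1 - x))⁻¹) :
    |∫ x in a..1, f x| ≤ 2 * c * √(1 - a) :=
  calc |∫ x in a..1, f x| ≤ ∫ x in a..1, c * (√(1 - x))⁻¹ :=
        norm_integral_le_of_norm_le (f := f) ha (ae_of_all _ hf)
          ((intervalIntegrable_inv_sqrt_one_sub ha).const_mul c)
    _ = 2 * c * √(1 - a) := by
        rw [intervalIntegral.integral_const_mul, integral_inv_sqrt_one_sub ha]; ring

end InvSqrtOneSub

section SphericalKernel

theorem cosh_mul_le (r : ℝ) {x : ℝ} (hx0 : 0 ≤ x) (hx1 : x ≤ 1) :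
    cosh (r * x) ≤ 1 - x + x * cosh r := by
  have hconv := fun y : ℝ => convexOn_exp.2 (mem_univ 0) (mem_univ y)
    (sub_nonneg.2 hx1) hx0 (sub_add_cancel 1 x)
  have hpos := hconv r
  have hneg := hconv (-r)
  simp only [smul_eq_mul, mul_zero, zero_add, exp_zero, mul_one] at hpos hneg
  rw [cosh_eq, cosh_eq, ← neg_mul, mul_comm r, mul_comm (-r)]
  linarith

theorem one_sub_mul_le_cosh_sub_cosh_mul (r : ℝ) {x : ℝ} (hx0 : 0 ≤ x) (hx1 : x ≤ 1) :
    (1 - x) * (cosh r - 1) ≤ cosh r - cosh (r * x) := by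
  nlinarith [cosh_mul_le r hx0 hx1]

/-- At `x = ±1` this takes the junk value `(√0)⁻¹ = 0`, which no integral sees. -/
noncomputable def sphericalKernel (r x : ℝ) : ℝ := (√(cosh r - cosh (r * x)))⁻¹

variable {r x : ℝ}

theorem sphericalKernel_nonneg (r x : ℝ) : 0 ≤ sphericalKernel r x :=
  inv_nonneg.2 (sqrt_nonneg _)

theorem sphericalKernel_le (hr : r ≠ 0) (hx0 : 0 ≤ x) (hx1 : x ≤ 1) :
    sphericalKernel r x ≤ (√(cosh r - 1))⁻¹ * (√(1 - x))⁻¹ := by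
  rcases hx1.eq_or_lt with rfl | hx1
  · simp [sphericalKernel]
  have hpos : 0 < (1 - x) * (cosh r - 1) :=
    mul_pos (by linarith) (by simpa using one_lt_cosh.2 hr)
  rw [← mul_inv, ← sqrt_mul (sub_nonneg.2 (one_le_cosh r)), mul_comm, sphericalKernel]
  exact inv_anti₀ (sqrt_pos.2 hpos)
    (sqrt_le_sqrt (one_sub_mul_le_cosh_sub_cosh_mul r hx0 hx1.le))

theorem hasDerivAt_sphericalKernel (h : cosh (r * x) < cosh r) :
    HasDerivAt (sphericalKernel r)
      (r * sinh (r * x) / (2 * √(cosh r - cosh (r * x)) ^ 3)) x := by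
  have hsqrt :=
    ((hasDerivAt_id' x).const_mul r).cosh.const_sub (cosh r) |>.sqrt (sub_pos.2 h).ne'
  refine (hsqrt.inv (sqrt_ne_zero'.2 (sub_pos.2 h))).congr_deriv ?_
  ring

theorem cosh_mul_lt_cosh (hr : r ≠ 0) (hx : |x| < 1) : cosh (r * x) < cosh r :=
  cosh_lt_cosh.2 (by rw [abs_mul]; exact mul_lt_of_lt_one_right (abs_pos.2 hr) hx)

theorem abs_cos_mul_sphericalKernel_le (hr : r ≠ 0) (θ : ℝ) (hx0 : 0 ≤ x) (hx1 : x ≤ 1) :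
    |cos (θ * x) * sphericalKernel r x| ≤ (√(cosh r - 1))⁻¹ * (√(1 - x))⁻¹ :=
  calc |cos (θ * x) * sphericalKernel r x| ≤ sphericalKernel r x := by
        rw [abs_mul, abs_of_nonneg (sphericalKernel_nonneg r x)]
        exact mul_le_of_le_one_left (sphericalKernel_nonneg r x) (abs_cos_le_one _)
    _ ≤ _ := sphericalKernel_le hr hx0 hx1

theorem intervalIntegrable_cos_mul_sphericalKernel (hr : r ≠ 0) (θ : ℝ) :
    IntervalIntegrable (fun x => cos (θ * x) * sphericalKernel r x) volume 0 1 := by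
  refine ((intervalIntegrable_inv_sqrt_one_sub zero_le_one).const_mul
    (√(cosh r - 1))⁻¹).mono_fun'
    (by unfold sphericalKernel; fun_prop)
    ((ae_restrict_iff' measurableSet_uIoc).2 (ae_of_all _ fun x hx => ?_))
  rw [uIoc_of_le zero_le_one] at hx
  exact abs_cos_mul_sphericalKernel_le hr θ hx.1.le hx.2

theorem abs_integral_cos_mul_sphericalKernel_le_of_lt_one {a θ : ℝ} (hr : 0 < r) (hθ : 0 < θ)
    (ha0 : 0 ≤ a) (ha1 : a < 1) :
    |∫ x in (0:ℝ)..a, cos (θ * x) * sphericalKernel r x| ≤ 2 * sphericalKernel r a / θ := by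
  have hlt : ∀ x ∈ Icc 0 a, cosh (r * x) < cosh r := fun x hx =>
    cosh_mul_lt_cosh hr.ne' (abs_lt.2 ⟨by linarith [hx.1], by linarith [hx.2]⟩)
  rw [← uIcc_of_le ha0] at hlt
  refine abs_integral_cos_mul_le_of_deriv_nonneg hθ ha0
    (fun x hx => hasDerivAt_sphericalKernel (hlt x hx)) ?_ (fun x hx => ?_)
    (sphericalKernel_nonneg r 0)
  · refine ContinuousOn.intervalIntegrable (ContinuousOn.div (by fun_prop) (by fun_prop) ?_)
    exact fun x hx => by have := sqrt_pos.2 (sub_pos.2 (hlt x hx)); positivity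
  · have := sinh_nonneg_iff.2 (mul_nonneg hr.le hx.1)
    positivity

theorem abs_integral_cos_mul_sphericalKernel_le_inv_sqrt (hr : 0 < r) {t : ℝ} (ht : 0 < t) :
    |∫ x in (0:ℝ)..1, cos (t * r * x) * sphericalKernel r x| ≤
      2 * (√(cosh r - 1))⁻¹ * (1 + r⁻¹) * (√t)⁻¹ := by
  set c := (√(cosh r - 1))⁻¹
  have htail : ∀ a ∈ Icc (0:ℝ) 1,
      |∫ x in a..1, cos (t * r * x) * sphericalKernel r x| ≤ 2 * c * √(1 - a) :=
    fun a ha => abs_integral_le_of_abs_le_inv_sqrt_one_sub ha.2 fun x hx =>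
      abs_cos_mul_sphericalKernel_le hr.ne' _ (ha.1.trans hx.1.le) hx.2
  rcases le_or_gt t 1 with ht1 | ht1
  · have hsqrt : 1 ≤ (√t)⁻¹ := one_le_inv₀ (sqrt_pos.2 ht) |>.2 (sqrt_le_one.2 ht1)
    calc _ ≤ 2 * c * √(1 - 0) := htail 0 ⟨le_rfl, zero_le_one⟩
      _ = 2 * c * 1 * 1 := by simp
      _ ≤ 2 * c * (1 + r⁻¹) * (√t)⁻¹ := by
          gcongr
          linarith [inv_pos.2 hr]
  set a := 1 - t⁻¹
  have ha0 : 0 ≤ a := sub_nonneg.2 (inv_le_one_of_one_le₀ ht1.le)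
  have ha1 : a < 1 := sub_lt_self 1 (inv_pos.2 ht)
  have ha : a ∈ uIcc 0 1 := by rw [uIcc_of_le zero_le_one]; exact ⟨ha0, ha1.le⟩
  have hint := intervalIntegrable_cos_mul_sphericalKernel hr.ne' (t * r)
  have hsplit := integral_add_adjacent_intervals
    (hint.mono_set (uIcc_subset_uIcc left_mem_uIcc ha))
    (hint.mono_set (uIcc_subset_uIcc ha right_mem_uIcc))
  have hKa : sphericalKernel r a ≤ c * √t := by
    simpa [a, sqrt_inv] using sphericalKernel_le hr.ne' ha0 ha1.le
  have hhead := abs_integral_cos_mul_sphericalKernel_le_of_lt_one hr (mul_pos ht hr) ha0 ha1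
  have htail' : |∫ x in a..1, cos (t * r * x) * sphericalKernel r x| ≤ 2 * c * (√t)⁻¹ := by
    simpa [a, sqrt_inv] using htail a ⟨ha0, ha1.le⟩
  rw [← hsplit]
  calc _ ≤ 2 * sphericalKernel r a / (t * r) + 2 * c * (√t)⁻¹ :=
        (abs_add_le _ _).trans (add_le_add hhead htail')
    _ ≤ 2 * (c * √t) / (t * r) + 2 * c * (√t)⁻¹ := by gcongr
    _ = 2 * c * (1 + r⁻¹) * (√t)⁻¹ := by
        rw [← sqrt_div_self (x := t)]
        ring

end SphericalKernel

/-- Oscillatory decay of the spherical function integral: for every `r > 0` there exists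
`C > 0` (depending only on `r`) such that for all `s ≠ 0`,
`|∫₀¹ cos(s·r·x)/√(cosh r − cosh(r·x)) dx| ≤ C·|s|^{−1/2}`. -/
theorem spherical_integral_decay (r : ℝ) (hr : 0 < r) :
    ∃ C : ℝ, 0 < C ∧ ∀ s : ℝ, s ≠ 0 →
      |∫ x in (0:ℝ)..1, Real.cos (s * r * x) / Real.sqrt (Real.cosh r - Real.cosh (r * x))| ≤
        C * |s| ^ (-(1:ℝ) / 2) := by
  have hc : 0 < (√(cosh r - 1))⁻¹ := inv_pos.2 (sqrt_pos.2 (sub_pos.2 (one_lt_cosh.2 hr.ne')))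
  refine ⟨2 * (√(cosh r - 1))⁻¹ * (1 + r⁻¹), by positivity, fun s hs => ?_⟩
  have heven : ∀ x, cos (s * r * x) = cos (|s| * r * x) := fun x => by
    rcases abs_choice s with h | h <;> simp [h]
  rw [rpow_neg_one_half_eq_inv_sqrt (abs_nonneg s)]
  simp only [div_eq_mul_inv, heven]
  exact abs_integral_cos_mul_sphericalKernel_le_inv_sqrt hr (abs_pos.2 hs)
end

section
/- For every r₁ > 0, the quantity α_{r₁} = (1/(π·r₁)) · ∫₀^π ln(e^{r₁}·cos²θ + e^{−r₁}·sin²θ) dθ satisfies 0 < α_{r₁} < 1. -/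
open Real

/-- The linear rate of escape of the step-`r₁` random walk on the hyperbolic plane:
`α_{r₁} = (1/(π·r₁)) · ∫₀^π ln(e^{r₁}·cos²θ + e^{−r₁}·sin²θ) dθ`. -/
noncomputable def alphaRate (r₁ : ℝ) : ℝ :=
  (1 / (π * r₁)) *
    ∫ θ in (0:ℝ)..π, Real.log (Real.exp r₁ * Real.cos θ ^ 2 + Real.exp (-r₁) * Real.sin θ ^ 2)

/-! Writing `a = e^{r₁}`, `b = e^{-r₁}`, the integrand `log (a cos²θ + b sin²θ)` is at most
`log a = r₁`, and by concavity of `log` at least `cos²θ · log a + sin²θ · log b = r₁ cos 2θ`,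
whose integral over `[0, π]` vanishes. Both bounds are strict somewhere (at `π/2`, resp. `π/4`),
so `0 < ∫ < π r₁`. -/

section Mixture

variable {a b : ℝ}

lemma mixture_pos (ha : 0 < a) (hb : 0 < b) (θ : ℝ) : 0 < a * cos θ ^ 2 + b * sin θ ^ 2 := by
  rcases le_total a b with hab | hba
  · nlinarith [mul_le_mul_of_nonneg_left hab (sq_nonneg (sin θ)), sin_sq_add_cos_sq θ]
  · nlinarith [mul_le_mul_of_nonneg_left hba (sq_nonneg (cos θ)), sin_sq_add_cos_sq θ]

lemma mixture_le_left (hba : b ≤ a) (θ : ℝ) : a * cos θ ^ 2 + b * sin θ ^ 2 ≤ a :=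
  calc a * cos θ ^ 2 + b * sin θ ^ 2 ≤ a * cos θ ^ 2 + a * sin θ ^ 2 := by gcongr
    _ = a := by rw [← mul_add, cos_sq_add_sin_sq, mul_one]

lemma continuous_log_mixture (ha : 0 < a) (hb : 0 < b) :
    Continuous fun θ => log (a * cos θ ^ 2 + b * sin θ ^ 2) :=
  (by fun_prop : Continuous fun θ => a * cos θ ^ 2 + b * sin θ ^ 2).log
    fun θ => (mixture_pos ha hb θ).ne'

lemma log_mixture_ge (ha : 0 < a) (hb : 0 < b) (θ : ℝ) :
    cos θ ^ 2 * log a + sin θ ^ 2 * log b ≤ log (a * cos θ ^ 2 + b * sin θ ^ 2) := by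
  have := strictConcaveOn_log_Ioi.concaveOn.2 (Set.mem_Ioi.2 ha) (Set.mem_Ioi.2 hb)
    (sq_nonneg (cos θ)) (sq_nonneg (sin θ)) (cos_sq_add_sin_sq θ)
  simpa only [smul_eq_mul, mul_comm _ a, mul_comm _ b] using this

lemma log_mixture_gt (ha : 0 < a) (hb : 0 < b) (hab : a ≠ b) {θ : ℝ}
    (hc : 0 < cos θ ^ 2) (hs : 0 < sin θ ^ 2) :
    cos θ ^ 2 * log a + sin θ ^ 2 * log b < log (a * cos θ ^ 2 + b * sin θ ^ 2) := by
  have := strictConcaveOn_log_Ioi.2 (Set.mem_Ioi.2 ha) (Set.mem_Ioi.2 hb) hab hc hs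
    (cos_sq_add_sin_sq θ)
  simpa only [smul_eq_mul, mul_comm _ a, mul_comm _ b] using this

lemma integral_log_mixture_lt (hb : 0 < b) (hba : b < a) :
    ∫ θ in (0:ℝ)..π, log (a * cos θ ^ 2 + b * sin θ ^ 2) < π * log a := by
  have ha : 0 < a := hb.trans hba
  calc ∫ θ in (0:ℝ)..π, log (a * cos θ ^ 2 + b * sin θ ^ 2)
      < ∫ _ in (0:ℝ)..π, log a := by
        refine intervalIntegral.integral_lt_integral_of_continuousOn_of_le_of_exists_lt pi_pos
          (continuous_log_mixture ha hb).continuousOn continuousOn_const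
          (fun θ _ => log_le_log (mixture_pos ha hb θ) (mixture_le_left hba.le θ)) ?_
        refine ⟨π / 2, ⟨by positivity, by linarith [pi_pos]⟩, ?_⟩
        simpa [cos_pi_div_two, sin_pi_div_two] using log_lt_log hb hba
    _ = π * log a := by simp

lemma integral_cos_sq_mul_add_sin_sq_mul (p q : ℝ) :
    ∫ θ in (0:ℝ)..π, (cos θ ^ 2 * p + sin θ ^ 2 * q) = π / 2 * (p + q) := by
  rw [intervalIntegral.integral_add (Continuous.intervalIntegrable (by fun_prop) _ _)
    (Continuous.intervalIntegrable (by fun_prop) _ _),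
    intervalIntegral.integral_mul_const, intervalIntegral.integral_mul_const,
    integral_cos_sq, integral_sin_sq]
  simp only [cos_pi, sin_pi, cos_zero, sin_zero]
  ring

lemma integral_log_mixture_gt (ha : 0 < a) (hb : 0 < b) (hab : a ≠ b) :
    π / 2 * log (a * b) < ∫ θ in (0:ℝ)..π, log (a * cos θ ^ 2 + b * sin θ ^ 2) := by
  have hc : 0 < cos (π / 4) ^ 2 := by rw [cos_pi_div_four]; positivity
  have hs : 0 < sin (π / 4) ^ 2 := by rw [sin_pi_div_four]; positivity
  calc π / 2 * log (a * b) = ∫ θ in (0:ℝ)..π, (cos θ ^ 2 * log a + sin θ ^ 2 * log b) := by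
        rw [integral_cos_sq_mul_add_sin_sq_mul, log_mul ha.ne' hb.ne']
    _ < ∫ θ in (0:ℝ)..π, log (a * cos θ ^ 2 + b * sin θ ^ 2) :=
        intervalIntegral.integral_lt_integral_of_continuousOn_of_le_of_exists_lt pi_pos
          (by fun_prop) (continuous_log_mixture ha hb).continuousOn
          (fun θ _ => log_mixture_ge ha hb θ)
          ⟨π / 4, ⟨by positivity, by linarith [pi_pos]⟩, log_mixture_gt ha hb hab hc hs⟩

end Mixture

/-- For every `r₁ > 0`, the rate of escape satisfies `0 < α_{r₁} < 1`. -/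
theorem alphaRate_mem_Ioo (r₁ : ℝ) (hr : 0 < r₁) : alphaRate r₁ ∈ Set.Ioo (0:ℝ) 1 := by
  have hlt : exp (-r₁) < exp r₁ := exp_lt_exp.2 (by linarith)
  have hlower := integral_log_mixture_gt (exp_pos r₁) (exp_pos (-r₁)) hlt.ne'
  have hupper := integral_log_mixture_lt (exp_pos (-r₁)) hlt
  rw [← exp_add, add_neg_cancel, exp_zero, log_one, mul_zero] at hlower
  rw [log_exp] at hupper
  have hpr : 0 < π * r₁ := by positivity
  exact ⟨mul_pos (one_div_pos.2 hpr) hlower, by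
    rw [alphaRate, one_div_mul_eq_div, div_lt_one hpr]; exact hupper⟩
end

section
/- Fix r₁ > 0. Let θ₁, θ₂, … be independent random variables uniformly distributed on [0, 2π), and define the random walk on the upper half-plane by z_k = (R(θ₁)·A_{r₁}·R(θ₂)·A_{r₁}·⋯·R(θ_k)·A_{r₁})·i, where the product of matrices acts on i ∈ ℍ by Möbius transformations. Then there exist constants C, c > 0 depending only on r₁ such that for every k ≥ 1 and every λ ≥ 0, P(|d(z_k, i) − α_{r₁}·r₁·k| ≥ λ·√k) ≤ C·e^{−c·λ²}, where d is the hyperbolic distance. -/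
open Real MeasureTheory ProbabilityTheory

/-- The rotation matrix `R(θ)` with rows `(cos θ, sin θ)` and `(−sin θ, cos θ)`. -/
noncomputable def rotMat (θ : ℝ) : Matrix (Fin 2) (Fin 2) ℝ :=
  !![Real.cos θ, Real.sin θ; -Real.sin θ, Real.cos θ]

/-- The diagonal matrix `A_r = diag(e^{r/2}, e^{−r/2})`. -/
noncomputable def diagMat (r : ℝ) : Matrix (Fin 2) (Fin 2) ℝ :=
  !![Real.exp (r / 2), 0; 0, Real.exp (-r / 2)]

/-- The Möbius action of a real 2×2 matrix on a point of the complex plane. -/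
noncomputable def moebius (m : Matrix (Fin 2) (Fin 2) ℝ) (z : ℂ) : ℂ :=
  ((m 0 0 : ℝ) * z + (m 0 1 : ℝ)) / ((m 1 0 : ℝ) * z + (m 1 1 : ℝ))

/-- The position after `k` steps of the distance-`r₁` random walk on the upper half-plane
started at `i`, driven by the angles `θ₁, …, θ_k`:
`z_k = (R(θ₁)·A_{r₁}·R(θ₂)·A_{r₁}·⋯·R(θ_k)·A_{r₁})·i`. -/
noncomputable def walk (r₁ : ℝ) (k : ℕ) (θ : ℕ → ℝ) : ℂ :=
  moebius ((List.ofFn fun j : Fin k => rotMat (θ j) * diagMat r₁).prod) Complex.I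

/-- The inverse hyperbolic cosine: `arcosh x = log (x + √(x² − 1))`. -/
noncomputable def arcosh (x : ℝ) : ℝ := Real.log (x + Real.sqrt (x ^ 2 - 1))

/-- The hyperbolic distance on the upper half-plane, determined by
`cosh d(z,w) = 1 + |z−w|²/(2·Im z·Im w)`. -/
noncomputable def hypDist (z w : ℂ) : ℝ :=
  _root_.arcosh (1 + ‖z - w‖ ^ 2 / (2 * z.im * w.im))

/-!
Write `M_k = R(θ₁) A ⋯ R(θ_k) A`, so that `z_k = M_k · i`. For `det M = 1`, `cosh d(M · i, i)` is
half the sum of the squared entries of `M`, hence `d(z_k, i)` is the logarithm of the longer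
squared row norm of `M_k` up to `log 2`. For the unit row vector `u_β` at angle `β`,
`u_β R(θ₁) A = √s(β + θ₁) · u_β'` with `s(φ) = e^r cos² φ + e^{-r} sin² φ`, so the log squared norm
of `u_β M_k` is a sum of increments `log s(β_{j-1} + θ_j)`. Each increment lies in `[-r, r]` and,
because `θ_j` is uniform and independent of the current angle `β_{j-1}`, has mean `α_r r` given
the past. Hoeffding's lemma, applied one step at a time, makes the centred sum sub-Gaussian with
variance proxy `k r²`, and the Chernoff bound for the two rows gives the Gaussian tail.
-/

open Matrix

lemma Matrix.dotProduct_self_row_pos {n : Type*} [Fintype n] [DecidableEq n] {m : Matrix n n ℝ}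
    (hdet : m.det ≠ 0) (i : n) : 0 < m i ⬝ᵥ m i := by
  refine lt_of_le_of_ne (Finset.sum_nonneg fun j _ => mul_self_nonneg _) (Ne.symm ?_)
  rw [Ne, dotProduct_self_eq_zero]
  exact fun h => hdet (det_eq_zero_of_row_eq_zero i fun j => congrFun h j)

lemma Real.log_le_arcosh {x : ℝ} (hx : 1 ≤ x) : log x ≤ Real.arcosh x :=
  log_le_log (by linarith) (le_add_of_nonneg_right (sqrt_nonneg _))

lemma Real.arcosh_le_log_two_mul {x : ℝ} (hx : 1 ≤ x) : Real.arcosh x ≤ log (2 * x) := by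
  refine log_le_log (by positivity) ?_
  have : √(x ^ 2 - 1) ≤ x := sqrt_le_iff.2 ⟨by linarith, by linarith⟩
  linarith

namespace ProbabilityTheory.HasSubgaussianMGF

variable {α E : Type*} [MeasurableSpace α] [MeasurableSpace E]

lemma add_prod {ν : Measure α} {μ : Measure E} [SFinite ν] [SFinite μ] {X : α → ℝ}
    {Y : α → E → ℝ} {c₁ c₂ : NNReal} (hX : HasSubgaussianMGF X c₁ ν)
    (hY : ∀ a, HasSubgaussianMGF (Y a) c₂ μ)
    (hint : ∀ t, Integrable (fun p : α × E => exp (t * (X p.1 + Y p.1 p.2))) (ν.prod μ)) :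
    HasSubgaussianMGF (fun p : α × E => X p.1 + Y p.1 p.2) (c₁ + c₂) (ν.prod μ) where
  integrable_exp_mul := hint
  mgf_le t := calc
    mgf (fun p : α × E => X p.1 + Y p.1 p.2) (ν.prod μ) t
        = ∫ a, exp (t * X a) * mgf (Y a) μ t ∂ν := by
      rw [mgf, integral_prod _ (hint t)]
      refine integral_congr_ae (ae_of_all _ fun a => ?_)
      simp only [mgf, mul_add, exp_add, integral_const_mul]
    _ ≤ ∫ a, exp (t * X a) * exp (c₂ * t ^ 2 / 2) ∂ν :=
      integral_mono_of_nonneg (ae_of_all _ fun a => mul_nonneg (exp_pos _).le mgf_nonneg)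
        ((hX.integrable_exp_mul t).mul_const _)
        (ae_of_all _ fun a => mul_le_mul_of_nonneg_left ((hY a).mgf_le t) (exp_pos _).le)
    _ = mgf X ν t * exp (c₂ * t ^ 2 / 2) := integral_mul_const _ _
    _ ≤ exp (c₁ * t ^ 2 / 2) * exp (c₂ * t ^ 2 / 2) := by gcongr; exact hX.mgf_le t
    _ = exp ((c₁ + c₂ : NNReal) * t ^ 2 / 2) := by rw [← exp_add]; push_cast; ring_nf

lemma measure_abs_ge_le {Ω : Type*} [MeasurableSpace Ω] {μ : Measure Ω} [IsFiniteMeasure μ]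
    {X : Ω → ℝ} {c : NNReal} (h : HasSubgaussianMGF X c μ) {ε : ℝ} (hε : 0 ≤ ε) :
    μ {ω | ε ≤ |X ω|} ≤ ENNReal.ofReal (2 * exp (-ε ^ 2 / (2 * c))) := by
  have hsub : {ω | ε ≤ |X ω|} ⊆ {ω | ε ≤ X ω} ∪ {ω | ε ≤ (-X) ω} :=
    fun ω (hω : ε ≤ |X ω|) => le_abs.1 hω
  rw [← ofReal_measureReal]
  refine ENNReal.ofReal_le_ofReal ?_
  calc μ.real {ω | ε ≤ |X ω|}
        ≤ μ.real {ω | ε ≤ X ω} + μ.real {ω | ε ≤ (-X) ω} :=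
        (measureReal_mono hsub).trans (measureReal_union_le _ _)
    _ ≤ exp (-ε ^ 2 / (2 * c)) + exp (-ε ^ 2 / (2 * c)) :=
        add_le_add (h.measure_ge_le hε) (h.neg.measure_ge_le hε)
    _ = 2 * exp (-ε ^ 2 / (2 * c)) := by ring

end ProbabilityTheory.HasSubgaussianMGF

namespace HyperbolicWalk

variable {m : Matrix (Fin 2) (Fin 2) ℝ}

lemma moebius_I (hdet : m.det = 1) :
    moebius m Complex.I =
      ⟨(m 0 0 * m 1 0 + m 0 1 * m 1 1) / (m 1 0 ^ 2 + m 1 1 ^ 2),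
        1 / (m 1 0 ^ 2 + m 1 1 ^ 2)⟩ := by
  have hpos := Matrix.dotProduct_self_row_pos (hdet ▸ one_ne_zero) (1 : Fin 2)
  simp only [dotProduct, Fin.sum_univ_two, ← sq] at hpos
  rw [det_fin_two] at hdet
  apply Complex.ext <;>
    simp [moebius, Complex.div_re, Complex.div_im, Complex.normSq_apply] <;>
    rw [show m 1 1 * m 1 1 + m 1 0 * m 1 0 = m 1 0 ^ 2 + m 1 1 ^ 2 by ring] <;>
    field_simp <;> linarith

lemma hypDist_moebius_I (hdet : m.det = 1) :
    hypDist (moebius m Complex.I) Complex.I =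
      Real.arcosh ((m 0 ⬝ᵥ m 0 + m 1 ⬝ᵥ m 1) / 2) := by
  have hpos := Matrix.dotProduct_self_row_pos (hdet ▸ one_ne_zero) (1 : Fin 2)
  simp only [dotProduct, Fin.sum_univ_two, ← sq] at hpos
  change Real.arcosh _ = _
  rw [moebius_I hdet, ← Complex.normSq_eq_norm_sq]
  rw [det_fin_two] at hdet
  congr 1
  simp [Complex.normSq_apply, dotProduct, Fin.sum_univ_two]
  field_simp
  linear_combination (-(m 0 0 * m 1 1 - m 0 1 * m 1 0) - 1) * hdet

lemma abs_hypDist_moebius_I_sub_max_log_le (hdet : m.det = 1) :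
    |hypDist (moebius m Complex.I) Complex.I - max (log (m 0 ⬝ᵥ m 0)) (log (m 1 ⬝ᵥ m 1))|
      ≤ log 2 := by
  have h0 := Matrix.dotProduct_self_row_pos (hdet ▸ one_ne_zero) (0 : Fin 2)
  have h1 := Matrix.dotProduct_self_row_pos (hdet ▸ one_ne_zero) (1 : Fin 2)
  set N := max (m 0 ⬝ᵥ m 0) (m 1 ⬝ᵥ m 1)
  set Q := m 0 ⬝ᵥ m 0 + m 1 ⬝ᵥ m 1
  have hlogN : max (log (m 0 ⬝ᵥ m 0)) (log (m 1 ⬝ᵥ m 1)) = log N :=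
    (Real.strictMonoOn_log.monotoneOn.map_max h0 h1).symm
  have hNQ : N ≤ Q := max_le (by linarith) (by linarith)
  have hQN : Q ≤ 2 * N := by
    rw [two_mul]; exact add_le_add (le_max_left _ _) (le_max_right _ _)
  have hQ : 1 ≤ Q / 2 := by
    rw [det_fin_two] at hdet
    simp only [Q, dotProduct, Fin.sum_univ_two]
    nlinarith [sq_nonneg (m 0 0 - m 1 1), sq_nonneg (m 0 1 + m 1 0)]
  have hN : 0 < N := lt_max_of_lt_left h0
  have hlo : log Q - log 2 ≤ Real.arcosh (Q / 2) := by
    rw [← log_div (by positivity) two_ne_zero]; exact log_le_arcosh hQ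
  have hhi : Real.arcosh (Q / 2) ≤ log Q := by
    simpa [mul_div_cancel₀] using arcosh_le_log_two_mul hQ
  have hNQlog : log N ≤ log Q := log_le_log hN hNQ
  have hQNlog : log Q ≤ log 2 + log N := by
    rw [← log_mul two_ne_zero hN.ne']; exact log_le_log (by positivity) hQN
  rw [hypDist_moebius_I hdet, hlogN, abs_le]
  constructor <;> linarith

noncomputable def unitVec (β : ℝ) : Fin 2 → ℝ := ![cos β, sin β]

noncomputable def stretch (r φ : ℝ) : ℝ := exp r * cos φ ^ 2 + exp (-r) * sin φ ^ 2

noncomputable def stretchAngle (r φ : ℝ) : ℝ :=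
  Complex.arg ⟨exp (r / 2) * cos φ, exp (-(r / 2)) * sin φ⟩

lemma unitVec_zero : unitVec 0 = Pi.single 0 1 := by
  ext j; fin_cases j <;> simp [unitVec]

lemma unitVec_pi_div_two : unitVec (π / 2) = Pi.single 1 1 := by
  ext j; fin_cases j <;> simp [unitVec]

lemma norm_smul_unitVec_arg (w : ℂ) : ‖w‖ • unitVec (Complex.arg w) = ![w.re, w.im] := by
  ext j; fin_cases j <;> simp [unitVec, Complex.norm_mul_cos_arg, Complex.norm_mul_sin_arg]

lemma unitVec_vecMul_rotMat (β a : ℝ) : unitVec β ᵥ* rotMat a = unitVec (β + a) := by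
  ext j; fin_cases j <;> simp [vecMul, dotProduct, rotMat, unitVec, cos_add, sin_add] <;> ring

lemma exp_neg_abs_le_stretch (r φ : ℝ) : exp (-|r|) ≤ stretch r φ := by
  have h₁ : exp (-|r|) ≤ exp r := exp_le_exp.2 (by linarith [neg_abs_le r])
  have h₂ : exp (-|r|) ≤ exp (-r) := exp_le_exp.2 (by linarith [le_abs_self r])
  calc exp (-|r|) = exp (-|r|) * cos φ ^ 2 + exp (-|r|) * sin φ ^ 2 := by
        rw [← mul_add, cos_sq_add_sin_sq, mul_one]
    _ ≤ stretch r φ := by unfold stretch; gcongr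

lemma stretch_le_exp_abs (r φ : ℝ) : stretch r φ ≤ exp |r| := by
  have h₁ : exp r ≤ exp |r| := exp_le_exp.2 (le_abs_self r)
  have h₂ : exp (-r) ≤ exp |r| := exp_le_exp.2 (neg_le_abs r)
  calc stretch r φ ≤ exp |r| * cos φ ^ 2 + exp |r| * sin φ ^ 2 := by unfold stretch; gcongr
    _ = exp |r| := by rw [← mul_add, cos_sq_add_sin_sq, mul_one]

lemma stretch_pos (r φ : ℝ) : 0 < stretch r φ :=
  (exp_pos _).trans_le (exp_neg_abs_le_stretch r φ)

lemma abs_log_stretch_le (r φ : ℝ) : |log (stretch r φ)| ≤ |r| := by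
  rw [abs_le]
  constructor
  · simpa using log_le_log (exp_pos _) (exp_neg_abs_le_stretch r φ)
  · simpa using log_le_log (stretch_pos r φ) (stretch_le_exp_abs r φ)

lemma unitVec_vecMul_rotMat_mul_diagMat (r β a : ℝ) :
    unitVec β ᵥ* (rotMat a * diagMat r) =
      √(stretch r (β + a)) • unitVec (stretchAngle r (β + a)) := by
  set w : ℂ := ⟨exp (r / 2) * cos (β + a), exp (-(r / 2)) * sin (β + a)⟩
  have hw : ‖w‖ = √(stretch r (β + a)) := by
    rw [Complex.norm_def, Complex.normSq_mk, stretch]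
    congr 1
    have e₁ : exp (r / 2) * exp (r / 2) = exp r := by rw [← exp_add, add_halves]
    have e₂ : exp (-(r / 2)) * exp (-(r / 2)) = exp (-r) := by rw [← exp_add]; ring_nf
    linear_combination cos (β + a) ^ 2 * e₁ + sin (β + a) ^ 2 * e₂
  rw [stretchAngle, ← hw, norm_smul_unitVec_arg, ← vecMul_vecMul, unitVec_vecMul_rotMat]
  ext j; fin_cases j <;> simp [vecMul, dotProduct, diagMat, unitVec, w, neg_div] <;> ring

variable {r : ℝ}

noncomputable def walkMat (r : ℝ) (k : ℕ) (x : Fin k → ℝ) : Matrix (Fin 2) (Fin 2) ℝ :=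
  (List.ofFn fun j : Fin k => rotMat (x j) * diagMat r).prod

lemma walk_eq_moebius_walkMat (r : ℝ) (k : ℕ) (θ : ℕ → ℝ) :
    walk r k θ = moebius (walkMat r k fun j => θ j) Complex.I := rfl

@[simp]
lemma walkMat_zero (x : Fin 0 → ℝ) : walkMat r 0 x = 1 := by
  simp [walkMat]

lemma walkMat_cons {k : ℕ} (a : ℝ) (y : Fin k → ℝ) :
    walkMat r (k + 1) (Fin.cons a y) = rotMat a * diagMat r * walkMat r k y := by
  simp [walkMat, List.ofFn_succ]

lemma det_walkMat {k : ℕ} (x : Fin k → ℝ) : (walkMat r k x).det = 1 := by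
  induction k with
  | zero => simp
  | succ k ih =>
    rw [← Fin.cons_self_tail x, walkMat_cons, det_mul, det_mul, ih, rotMat, diagMat,
      det_fin_two_of, det_fin_two_of, ← exp_add]
    simp [← sq, cos_sq_add_sin_sq, neg_div]

lemma continuous_walkMat (k : ℕ) : Continuous (walkMat r k) := by
  induction k with
  | zero => exact continuous_const.congr fun x => (walkMat_zero x).symm
  | succ k ih =>
    have hrot : Continuous rotMat := by
      refine continuous_matrix fun i j => ?_
      fin_cases i <;> fin_cases j <;> simp [rotMat] <;> fun_prop
    have hcons : walkMat r (k + 1) =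
        fun x => rotMat (x 0) * diagMat r * walkMat r k (Fin.tail x) := by
      funext x; rw [← walkMat_cons, Fin.cons_self_tail]
    rw [hcons]
    exact ((hrot.comp (continuous_apply 0)).matrix_mul continuous_const).matrix_mul
      (ih.comp (continuous_pi fun j => continuous_apply j.succ))

noncomputable def rowNormSq (r : ℝ) (k : ℕ) (β : ℝ) (x : Fin k → ℝ) : ℝ :=
  (unitVec β ᵥ* walkMat r k x) ⬝ᵥ (unitVec β ᵥ* walkMat r k x)

lemma rowNormSq_zero_angle {k : ℕ} (x : Fin k → ℝ) :
    rowNormSq r k 0 x = walkMat r k x 0 ⬝ᵥ walkMat r k x 0 := by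
  rw [rowNormSq, unitVec_zero, single_one_vecMul, row]

lemma rowNormSq_pi_div_two {k : ℕ} (x : Fin k → ℝ) :
    rowNormSq r k (π / 2) x = walkMat r k x 1 ⬝ᵥ walkMat r k x 1 := by
  rw [rowNormSq, unitVec_pi_div_two, single_one_vecMul, row]

lemma rowNormSq_cons {k : ℕ} (β a : ℝ) (y : Fin k → ℝ) :
    rowNormSq r (k + 1) β (Fin.cons a y) =
      stretch r (β + a) * rowNormSq r k (stretchAngle r (β + a)) y := by
  rw [rowNormSq, rowNormSq, walkMat_cons, ← vecMul_vecMul, unitVec_vecMul_rotMat_mul_diagMat,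
    smul_vecMul, smul_dotProduct, dotProduct_smul, smul_smul, smul_eq_mul,
    mul_self_sqrt (stretch_pos r _).le]

@[simp]
lemma rowNormSq_zero (β : ℝ) (x : Fin 0 → ℝ) : rowNormSq r 0 β x = 1 := by
  simp [rowNormSq, unitVec, dotProduct, ← sq, cos_sq_add_sin_sq]

lemma rowNormSq_pos {k : ℕ} (β : ℝ) (x : Fin k → ℝ) : 0 < rowNormSq r k β x := by
  induction k generalizing β with
  | zero => simp
  | succ k ih =>
    rw [← Fin.cons_self_tail x, rowNormSq_cons]
    exact mul_pos (stretch_pos r _) (ih _ _)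

lemma abs_log_rowNormSq_le {k : ℕ} (β : ℝ) (x : Fin k → ℝ) :
    |log (rowNormSq r k β x)| ≤ k * |r| := by
  induction k generalizing β with
  | zero => simp
  | succ k ih =>
    rw [← Fin.cons_self_tail x, rowNormSq_cons,
      log_mul (stretch_pos r _).ne' (rowNormSq_pos _ _).ne']
    calc _ ≤ |log (stretch r (β + x 0))| + |log (rowNormSq r k (stretchAngle r (β + x 0))
          (Fin.tail x))| := abs_add_le _ _
      _ ≤ |r| + k * |r| := add_le_add (abs_log_stretch_le r _) (ih _ _)
      _ = (k + 1 : ℕ) * |r| := by push_cast; ring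

lemma continuous_rowNormSq (k : ℕ) (β : ℝ) : Continuous (rowNormSq r k β) := by
  have hrow : Continuous fun x => unitVec β ᵥ* walkMat r k x :=
    continuous_const.matrix_vecMul (continuous_walkMat k)
  exact hrow.dotProduct hrow

noncomputable def uniformAngle : Measure ℝ := volume[|Set.Ico 0 (2 * π)]

lemma uniformAngle_eq :
    uniformAngle =
      (ENNReal.ofReal (2 * π))⁻¹ • volume.restrict (Set.Ico (0:ℝ) (2 * π)) := by
  rw [uniformAngle, ProbabilityTheory.cond, Real.volume_Ico, sub_zero]

instance : IsProbabilityMeasure uniformAngle :=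
  cond_isProbabilityMeasure_of_finite (by simp [pi_pos]) (by simp [ENNReal.mul_eq_top])

lemma integral_uniformAngle_comp_add {f : ℝ → ℝ} (hf : Function.Periodic f (2 * π))
    (β : ℝ) :
    ∫ a, f (β + a) ∂uniformAngle = (2 * π)⁻¹ * ∫ a in 0..2 * π, f a := by
  rw [uniformAngle_eq, integral_smul_measure, ENNReal.toReal_inv,
    ENNReal.toReal_ofReal (by positivity), smul_eq_mul,
    setIntegral_congr_set Ico_ae_eq_Ioc, ← intervalIntegral.integral_of_le (by positivity),
    intervalIntegral.integral_comp_add_left, add_zero, hf.intervalIntegral_add_eq β 0, zero_add]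

lemma periodic_stretch (r : ℝ) : Function.Periodic (stretch r) π := by
  intro φ; simp [stretch, cos_add_pi, sin_add_pi]

lemma continuous_log_stretch (r : ℝ) : Continuous fun φ => log (stretch r φ) :=
  (by unfold stretch; fun_prop : Continuous (stretch r)).log fun φ => (stretch_pos r φ).ne'

lemma integral_log_stretch (r β : ℝ) :
    ∫ a, log (stretch r (β + a)) ∂uniformAngle = alphaRate r * r := by
  have hper : Function.Periodic (fun φ => log (stretch r φ)) π :=
    fun φ => by simp only [periodic_stretch r φ]
  have h2 := hper.intervalIntegral_add_zsmul_eq 2 0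
    fun _ _ => (continuous_log_stretch r).intervalIntegrable _ _
  rw [integral_uniformAngle_comp_add (f := fun φ => log (stretch r φ))
    (by simpa [two_mul] using hper.nat_mul 2) β]
  rcases eq_or_ne r 0 with rfl | hr
  · -- `alphaRate 0 = 0` through `1 / (π * 0) = 0`, while `stretch 0 = 1`
    simp [stretch]
  · simp only [zero_add, zsmul_eq_mul, Int.cast_ofNat] at h2
    rw [h2, alphaRate]
    unfold stretch
    field_simp

lemma hasSubgaussianMGF_log_stretch (r β : ℝ) :
    HasSubgaussianMGF (fun a => log (stretch r (β + a)) - alphaRate r * r) (‖r‖₊ ^ 2)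
      uniformAngle := by
  have h := hasSubgaussianMGF_of_mem_Icc (μ := uniformAngle) (a := -|r|) (b := |r|)
    ((continuous_log_stretch r).comp (continuous_const_add β)).aemeasurable
    (ae_of_all _ fun a => abs_le.1 (abs_log_stretch_le r (β + a)))
  simp only [Function.comp_def, integral_log_stretch] at h
  convert h using 2
  ext
  simp [← two_mul]

noncomputable def centeredLogRowNormSq (r : ℝ) (k : ℕ) (β : ℝ) (x : Fin k → ℝ) : ℝ :=
  log (rowNormSq r k β x) - k * (alphaRate r * r)

lemma centeredLogRowNormSq_cons {k : ℕ} (β a : ℝ) (y : Fin k → ℝ) :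
    centeredLogRowNormSq r (k + 1) β (Fin.cons a y) =
      (log (stretch r (β + a)) - alphaRate r * r) +
        centeredLogRowNormSq r k (stretchAngle r (β + a)) y := by
  rw [centeredLogRowNormSq, centeredLogRowNormSq, rowNormSq_cons,
    log_mul (stretch_pos r _).ne' (rowNormSq_pos _ _).ne']
  push_cast; ring

lemma centeredLogRowNormSq_mem_Icc {k : ℕ} (β : ℝ) (x : Fin k → ℝ) :
    centeredLogRowNormSq r k β x ∈
      Set.Icc (-(k * |r|) - k * (alphaRate r * r)) (k * |r| - k * (alphaRate r * r)) := by
  have := abs_le.1 (abs_log_rowNormSq_le (r := r) β x)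
  constructor <;> unfold centeredLogRowNormSq <;> linarith [this.1, this.2]

lemma measurable_centeredLogRowNormSq (k : ℕ) (β : ℝ) :
    Measurable (centeredLogRowNormSq r k β) :=
  (measurable_log.comp (continuous_rowNormSq k β).measurable).sub_const _

lemma hasSubgaussianMGF_centeredLogRowNormSq (r : ℝ) (k : ℕ) (β : ℝ) :
    HasSubgaussianMGF (centeredLogRowNormSq r k β) (k * ‖r‖₊ ^ 2)
      (Measure.pi fun _ : Fin k => uniformAngle) := by
  induction k generalizing β with
  | zero =>
    have h0 : centeredLogRowNormSq r 0 β = fun _ => 0 :=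
      funext fun x => by simp [centeredLogRowNormSq]
    rw [h0, Nat.cast_zero, zero_mul]
    exact HasSubgaussianMGF.fun_zero
  | succ k ih =>
    set e := MeasurableEquiv.piFinSuccAbove (fun _ : Fin (k + 1) => ℝ) 0
    have he : ∀ p, e.symm p = Fin.cons p.1 p.2 := fun p => by
      simp [e, Fin.insertNthEquiv, Fin.insertNth_zero']
    have hsum : ∀ p : ℝ × (Fin k → ℝ),
        (log (stretch r (β + p.1)) - alphaRate r * r) +
          centeredLogRowNormSq r k (stretchAngle r (β + p.1)) p.2 =
        centeredLogRowNormSq r (k + 1) β (e.symm p) := fun p => by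
      rw [he, centeredLogRowNormSq_cons]
    have hprod := (hasSubgaussianMGF_log_stretch r β).add_prod
      (fun a => ih (stretchAngle r (β + a))) fun t => by
        simp_rw [hsum]
        exact integrable_exp_mul_of_mem_Icc
          ((measurable_centeredLogRowNormSq _ _).comp e.symm.measurable).aemeasurable
          (ae_of_all _ fun p => centeredLogRowNormSq_mem_Icc _ _)
    rw [← (measurePreserving_piFinSuccAbove (fun _ => uniformAngle) 0).map_eq] at hprod
    convert hprod.of_map e.measurable.aemeasurable using 1
    · funext x
      simp only [Function.comp_apply, hsum, MeasurableEquiv.symm_apply_apply]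
    · push_cast; ring

lemma abs_hypDist_walkMat_sub_le (r : ℝ) {k : ℕ} (x : Fin k → ℝ) :
    |hypDist (moebius (walkMat r k x) Complex.I) Complex.I - k * (alphaRate r * r)| ≤
      log 2 + max |centeredLogRowNormSq r k 0 x| |centeredLogRowNormSq r k (π / 2) x| := by
  have hrows := abs_hypDist_moebius_I_sub_max_log_le (det_walkMat (r := r) x)
  have hmax := abs_max_sub_max_le_max (log (walkMat r k x 0 ⬝ᵥ walkMat r k x 0))
    (log (walkMat r k x 1 ⬝ᵥ walkMat r k x 1)) (k * (alphaRate r * r)) (k * (alphaRate r * r))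
  rw [max_self] at hmax
  simp only [centeredLogRowNormSq, rowNormSq_zero_angle, rowNormSq_pi_div_two]
  exact (abs_sub_le _ _ _).trans (add_le_add hrows hmax)

lemma measure_abs_hypDist_walkMat_sub_ge_le (r : ℝ) (k : ℕ) {t : ℝ} (ht : 0 ≤ t) :
    (Measure.pi fun _ : Fin k => uniformAngle)
        {x | t ≤ |hypDist (moebius (walkMat r k x) Complex.I) Complex.I -
          k * (alphaRate r * r)|}
      ≤ ENNReal.ofReal (4 * exp ((log 2 ^ 2 - t ^ 2 / 2) / (2 * (k * r ^ 2)))) := by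
  have hden : 0 ≤ 2 * (k * r ^ 2) := by positivity
  rcases lt_or_ge t (log 2) with hsmall | hlarge
  · refine prob_le_one.trans ?_
    rw [← ENNReal.ofReal_one]
    refine ENNReal.ofReal_le_ofReal ?_
    have : 0 ≤ (log 2 ^ 2 - t ^ 2 / 2) / (2 * (k * r ^ 2)) := div_nonneg (by nlinarith) hden
    linarith [one_le_exp this]
  have hsub : {x | t ≤ |hypDist (moebius (walkMat r k x) Complex.I) Complex.I -
        k * (alphaRate r * r)|} ⊆
      {x | t - log 2 ≤ |centeredLogRowNormSq r k 0 x|} ∪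
        {x | t - log 2 ≤ |centeredLogRowNormSq r k (π / 2) x|} := fun x (hx : t ≤ _) =>
    le_max_iff.1 (show t - log 2 ≤ max _ _ by linarith [abs_hypDist_walkMat_sub_le r x])
  have htail : ∀ β, (Measure.pi fun _ : Fin k => uniformAngle)
      {x | t - log 2 ≤ |centeredLogRowNormSq r k β x|} ≤
        ENNReal.ofReal (2 * exp (-(t - log 2) ^ 2 / (2 * (k * r ^ 2)))) := fun β => by
    simpa using (hasSubgaussianMGF_centeredLogRowNormSq r k β).measure_abs_ge_le
      (sub_nonneg.2 hlarge)
  have hexp : -(t - log 2) ^ 2 / (2 * (k * r ^ 2)) ≤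
      (log 2 ^ 2 - t ^ 2 / 2) / (2 * (k * r ^ 2)) :=
    div_le_div_of_nonneg_right (by nlinarith [sq_nonneg (t - 2 * log 2)]) hden
  calc _ ≤ _ := (measure_mono hsub).trans (measure_union_le _ _)
    _ ≤ _ := add_le_add (htail 0) (htail (π / 2))
    _ = ENNReal.ofReal (4 * exp (-(t - log 2) ^ 2 / (2 * (k * r ^ 2)))) := by
      rw [← ENNReal.ofReal_add (by positivity) (by positivity)]; ring_nf
    _ ≤ _ := ENNReal.ofReal_le_ofReal (by gcongr)

end HyperbolicWalk

open HyperbolicWalk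

/-- Concentration for the rate of escape of the discrete random walk on the hyperbolic
plane: for fixed `r₁ > 0` there are `C, c > 0` depending only on `r₁` such that whenever
`θ₁, θ₂, …` are i.i.d. uniform on `[0, 2π)` and `z_k` is the `k`-step distance-`r₁` walk
started at `i`, for every `k ≥ 1` and `λ ≥ 0`,
`P(|d(z_k, i) − α_{r₁}·r₁·k| ≥ λ·√k) ≤ C·e^{−c·λ²}`. -/
theorem walk_distance_concentration (r₁ : ℝ) (hr : 0 < r₁) :
    ∃ C : ℝ, 0 < C ∧ ∃ c : ℝ, 0 < c ∧
      ∀ (Ω : Type) [MeasurableSpace Ω] (P : Measure Ω) [IsProbabilityMeasure P]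
        (θ : ℕ → Ω → ℝ), (∀ j, Measurable (θ j)) →
        iIndepFun (m := fun _ => Real.measurableSpace) θ P →
        (∀ j, Measure.map (θ j) P =
          (ENNReal.ofReal (2 * π))⁻¹ • volume.restrict (Set.Ico (0:ℝ) (2 * π))) →
        ∀ k : ℕ, 1 ≤ k → ∀ lam : ℝ, 0 ≤ lam →
          P {ω | lam * Real.sqrt k ≤
              |hypDist (walk r₁ k fun j => θ j ω) Complex.I - alphaRate r₁ * r₁ * k|} ≤
            ENNReal.ofReal (C * Real.exp (-c * lam ^ 2)) := by
  refine ⟨4 * exp (log 2 ^ 2 / (2 * r₁ ^ 2)), by positivity,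
    1 / (4 * r₁ ^ 2), by positivity, ?_⟩
  intro Ω _ P _ θ hmeas hindep hlaw k hk lam hlam
  have hpi : P.map (fun ω (j : Fin k) => θ j ω) = Measure.pi fun _ => uniformAngle := by
    rw [iIndepFun.map_fun_eq_pi_map (fun j : Fin k => (hmeas j).aemeasurable)
      (hindep.precomp Fin.val_injective)]
    simp only [hlaw, uniformAngle_eq]
  have hk' : (1 : ℝ) ≤ k := by exact_mod_cast hk
  have hexp : (log 2 ^ 2 - (lam * √k) ^ 2 / 2) / (2 * (k * r₁ ^ 2)) =
      log 2 ^ 2 / (2 * r₁ ^ 2) / k + -(1 / (4 * r₁ ^ 2)) * lam ^ 2 := by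
    rw [mul_pow, sq_sqrt (by positivity)]; field_simp; ring
  calc _ ≤ P.map (fun ω (j : Fin k) => θ j ω)
        {x | lam * √k ≤ |hypDist (moebius (walkMat r₁ k x) Complex.I) Complex.I -
          k * (alphaRate r₁ * r₁)|} := by
        refine le_of_eq_of_le ?_ (Measure.le_map_apply (by fun_prop) _)
        simp only [walk_eq_moebius_walkMat, mul_comm (k : ℝ)]; rfl
    _ ≤ _ := hpi ▸ measure_abs_hypDist_walkMat_sub_ge_le r₁ k (by positivity)
    _ ≤ _ := by
      rw [hexp, exp_add, ← mul_assoc]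
      gcongr ENNReal.ofReal (4 * exp ?_ * _)
      exact div_le_self (by positivity) hk'
end

section
/- Let (X, μ) be a measure space and let H be a finite group of order N acting on X by measurable measure-preserving bijections, inducing a unitary action on L²(μ) by (h·f)(x) = f(h^{−1}x). Let W ⊆ L²(μ) be a finite-dimensional subspace invariant under this action, and let P_W denote the orthogonal projection onto W. Let f ∈ L²(μ) be such that the supports of the functions h·f, for h ∈ H, are pairwise almost-everywhere disjoint. Then ‖P_W f‖₂² ≤ (dim W / N)·‖f‖₂². -/
/-!
The translates `h · f` are pairwise orthogonal in `L²` (their supports are disjoint) and all have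
norm `‖f‖`, so after normalisation Bessel's inequality applies to them. Summing the squared
projections of the translates onto an orthonormal basis `u₁, …, u_d` of `W` and exchanging the
sums gives `∑ₕ ‖P_W (h · f)‖² ≤ ∑ⱼ ‖f‖² ‖uⱼ‖² = d ‖f‖²`. Since `W` is invariant and the action
is isometric, `P_W` commutes with it, so every term on the left equals `‖P_W f‖²`.
-/

open MeasureTheory Finset Module

section Projection

variable {𝕜 E : Type*} [RCLike 𝕜] [NormedAddCommGroup E] [InnerProductSpace 𝕜 E]
  (W : Submodule 𝕜 E) [FiniteDimensional 𝕜 W]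

local notation "⟪" x ", " y "⟫" => inner 𝕜 x y

theorem Submodule.sq_norm_orthogonalProjectionOnto_eq_sum {ι : Type*} [Fintype ι]
    (b : OrthonormalBasis ι 𝕜 W) (x : E) :
    ‖W.orthogonalProjectionOnto x‖ ^ 2 = ∑ j, ‖⟪(b j : E), x⟫‖ ^ 2 := by
  simp only [← b.sum_sq_norm_inner_right (W.orthogonalProjectionOnto x),
    Submodule.inner_orthogonalProjectionOnto_eq_of_mem_left]

theorem Orthonormal.sum_sq_norm_orthogonalProjectionOnto_le {ι : Type*} [Fintype ι]
    {e : ι → E} (he : Orthonormal 𝕜 e) :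
    ∑ i, ‖W.orthogonalProjectionOnto (e i)‖ ^ 2 ≤ finrank 𝕜 W := by
  let b := stdOrthonormalBasis 𝕜 W
  calc ∑ i, ‖W.orthogonalProjectionOnto (e i)‖ ^ 2
      = ∑ j, ∑ i, ‖⟪e i, (b j : E)⟫‖ ^ 2 := by
        simp only [W.sq_norm_orthogonalProjectionOnto_eq_sum b, norm_inner_symm]
        exact sum_comm
    _ ≤ ∑ _j : Fin (finrank 𝕜 W), (1 : ℝ) := by
        gcongr with j
        have hbj : ‖(b j : E)‖ = 1 := b.orthonormal.1 j
        simpa [hbj] using he.sum_inner_products_le (s := univ) (b j : E)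
    _ = finrank 𝕜 W := by simp

theorem Submodule.sum_sq_norm_orthogonalProjectionOnto_le_of_pairwise_inner_eq_zero
    {ι : Type*} [Fintype ι] {v : ι → E} (hv : Pairwise fun i j => ⟪v i, v j⟫ = 0) {c : ℝ}
    (hc : ∀ i, ‖v i‖ = c) :
    ∑ i, ‖W.orthogonalProjectionOnto (v i)‖ ^ 2 ≤ finrank 𝕜 W * c ^ 2 := by
  rcases eq_or_ne c 0 with rfl | hc0
  · simp [norm_eq_zero.mp (hc _)]
  have he : Orthonormal 𝕜 fun i => (c⁻¹ : 𝕜) • v i := by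
    refine ⟨fun i => ?_, fun i j hij => ?_⟩
    · simp [norm_smul, hc, abs_of_nonneg (hc i ▸ norm_nonneg _), hc0]
    · simp [inner_smul_left, inner_smul_right, hv hij]
  have hscale : ∀ i, ‖W.orthogonalProjectionOnto (v i)‖ ^ 2
      = c ^ 2 * ‖W.orthogonalProjectionOnto ((c⁻¹ : 𝕜) • v i)‖ ^ 2 := by
    intro i
    rw [map_smul, norm_smul, mul_pow, ← mul_assoc, norm_inv, RCLike.norm_ofReal, inv_pow,
      sq_abs, mul_inv_cancel₀ (pow_ne_zero 2 hc0), one_mul]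
  rw [sum_congr rfl fun i _ => hscale i, ← mul_sum, mul_comm]
  gcongr
  exact he.sum_sq_norm_orthogonalProjectionOnto_le W

variable {W}

theorem Submodule.starProjection_linearIsometry_of_map_le {T : E →ₗᵢ[𝕜] E}
    (hT : W.map T.toLinearMap ≤ W) (x : E) :
    W.starProjection (T x) = T (W.starProjection x) := by
  -- `T W = W` without surjectivity of `T`: an injective map preserves the finite dimension of `W`.
  have hmap : W.map T.toLinearMap = W := Submodule.eq_of_le_of_finrank_eq hT
    (Submodule.equivMapOfInjective _ T.injective W).finrank_eq.symm
  refine W.eq_starProjection_of_mem_of_inner_eq_zero (hT ⟨_, W.starProjection_apply_mem x, rfl⟩) ?_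
  rintro _ hw
  rw [← hmap] at hw
  obtain ⟨w, hw, rfl⟩ := hw
  rw [← map_sub, T.coe_toLinearMap, T.inner_map_map, W.starProjection_inner_eq_zero x w hw]

theorem Submodule.norm_orthogonalProjectionOnto_linearIsometry_of_map_le {T : E →ₗᵢ[𝕜] E}
    (hT : W.map T.toLinearMap ≤ W) (x : E) :
    ‖W.orthogonalProjectionOnto (T x)‖ = ‖W.orthogonalProjectionOnto x‖ := by
  simpa only [Submodule.starProjection_apply, Submodule.coe_norm, T.norm_map] using
    congrArg norm (Submodule.starProjection_linearIsometry_of_map_le hT x)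

end Projection

theorem MeasureTheory.L2.inner_toLp_eq_zero_of_measure_support_inter_eq_zero
    {α 𝕜 E : Type*} [MeasurableSpace α] {μ : Measure α} [RCLike 𝕜] [NormedAddCommGroup E]
    [InnerProductSpace 𝕜 E] {g g' : α → E} (hg : MemLp g 2 μ) (hg' : MemLp g' 2 μ)
    (hgg' : μ {x | g x ≠ 0 ∧ g' x ≠ 0} = 0) :
    inner 𝕜 (hg.toLp g) (hg'.toLp g') = 0 := by
  rw [L2.inner_def]
  refine integral_eq_zero_of_ae ?_
  filter_upwards [hg.coeFn_toLp, hg'.coeFn_toLp, measure_eq_zero_iff_ae_notMem.mp hgg']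
    with x hx hx' hx_notMem
  by_cases hgx : g x = 0
  · simp [hx, hgx]
  · simp [hx, hx', show g' x = 0 by simpa [hgx] using hx_notMem]

/-- Projection bound for invariant subspaces under a finite group action with disjointly
supported translates: if a finite group `H` of order `N` acts on `(X, μ)` by measure
preserving maps, `W ⊆ L²(μ)` is a finite-dimensional subspace invariant under the induced
action `(h·f)(x) = f(h⁻¹x)`, and `f ∈ L²(μ)` has the supports of its translates `h·f`
pairwise almost-everywhere disjoint, then `‖P_W f‖₂² ≤ (dim W / N)·‖f‖₂²`. -/
theorem projection_bound_of_invariant_subspace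
    {X : Type*} [MeasurableSpace X] (μ : Measure X)
    {H : Type*} [Group H] [Fintype H] [MulAction H X]
    (hact : ∀ h : H, MeasurePreserving (fun x : X => h • x) μ μ)
    (W : Submodule ℝ (Lp ℝ 2 μ)) [FiniteDimensional ℝ W]
    (hWinv : ∀ (h : H) (w : Lp ℝ 2 μ), w ∈ W →
      ∀ (hw : MemLp (fun x => w (h⁻¹ • x)) 2 μ),
        MemLp.toLp (fun x => w (h⁻¹ • x)) hw ∈ W)
    (f : X → ℝ) (hf : MemLp f 2 μ)
    (hdisj : ∀ h h' : H, h ≠ h' →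
      μ {x : X | f (h⁻¹ • x) ≠ 0 ∧ f (h'⁻¹ • x) ≠ 0} = 0) :
    ‖(Submodule.orthogonalProjectionOnto W (MemLp.toLp f hf) : Lp ℝ 2 μ)‖ ^ 2 ≤
      ((Module.finrank ℝ W : ℝ) / (Fintype.card H : ℝ)) * ‖MemLp.toLp f hf‖ ^ 2 := by
  set F := hf.toLp f
  let T : H → Lp ℝ 2 μ →ₗᵢ[ℝ] Lp ℝ 2 μ := fun h =>
    Lp.compMeasurePreservingₗᵢ ℝ (fun x => h⁻¹ • x) (hact h⁻¹)
  have hTW : ∀ h, W.map (T h).toLinearMap ≤ W := by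
    rintro h _ ⟨w, hw, rfl⟩
    convert hWinv h w hw ((Lp.memLp w).comp_measurePreserving (hact h⁻¹)) using 1
    exact Lp.ext ((Lp.coeFn_compMeasurePreserving w _).trans (MemLp.coeFn_toLp _).symm)
  have horth : Pairwise fun h h' => inner ℝ (T h F) (T h' F) = 0 := fun h h' hne =>
    L2.inner_toLp_eq_zero_of_measure_support_inter_eq_zero (hf.comp_measurePreserving (hact h⁻¹))
      (hf.comp_measurePreserving (hact h'⁻¹)) (hdisj h h' hne)
  have hsum := W.sum_sq_norm_orthogonalProjectionOnto_le_of_pairwise_inner_eq_zero horth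
    fun h => (T h).norm_map F
  simp only [Submodule.norm_orthogonalProjectionOnto_linearIsometry_of_map_le (hTW _), sum_const,
    card_univ, nsmul_eq_mul] at hsum
  rw [div_mul_eq_mul_div, le_div_iff₀ (by positivity), mul_comm]
  exact hsum
end

section
/- Let (X, μ) be a finite measure space, let Y ⊆ Z ⊆ X be measurable sets with μ(Y) > 0, and let κ > 0. Let b_Y = μ(Y)^{−1}·𝟙_Y, and suppose T : L²(μ) → L²(μ) is a linear operator such that: (i) T maps the constant function 1 to itself; (ii) ‖T g‖₂ ≤ √κ·‖g‖₂ for every g ∈ L²(μ) with ∫ g dμ = 0; (iii) T b_Y ≥ 0 almost everywhere, T b_Y vanishes almost everywhere outside Z, and ∫ T b_Y dμ = 1. Then, writing c = μ(Y)/μ(X), one has μ(Z)/μ(X) ≥ c/(κ·(1 − c) + c). (Isoperimetric inequality: applied with T the distance-r averaging operator A_r on a hyperbolic surface with κ = (r+1)²e^{−2r/p}, it bounds the growth of the r-neighborhood Y_r = Z of Y.) -/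
/-!
Write `b = b_Y` and `e = 1`, so that `∫ g = ⟪e, g⟫` and `‖e‖² = μ(X)`. Both `b` and `T b` have
inner product `1` with `e`, hence project onto `e` as `μ(X)⁻¹ • e`, and `T` maps the orthogonal
part `b - μ(X)⁻¹ • e` of `b` to that of `T b`. Pythagoras and the spectral bound give
`‖T b‖² ≤ μ(X)⁻¹ + κ (μ(Y)⁻¹ - μ(X)⁻¹)`, while Cauchy–Schwarz against `𝟙_Z`, outside of which
`T b` vanishes, gives `1 = (∫ T b)² ≤ ‖T b‖² μ(Z)`. Combining the two is the claim.
-/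

open MeasureTheory

section InnerProductSpace

variable {E : Type*} [NormedAddCommGroup E] [InnerProductSpace ℝ E]

lemma norm_sq_eq_norm_sub_smul_sq_add_inv {e v : E} (hv : inner ℝ e v = 1) :
    ‖v‖ ^ 2 = ‖v - (‖e‖ ^ 2)⁻¹ • e‖ ^ 2 + (‖e‖ ^ 2)⁻¹ := by
  have he : e ≠ 0 := by rintro rfl; simp at hv
  rw [norm_sub_sq_real, real_inner_smul_right, real_inner_comm, hv, norm_smul, mul_pow,
    Real.norm_eq_abs, sq_abs]
  field_simp
  ring

lemma norm_sq_apply_le_of_inner_eq_one (T : E →ₗ[ℝ] E) {e v : E} {C : ℝ} (hTe : T e = e)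
    (hT : ∀ g, inner ℝ e g = 0 → ‖T g‖ ≤ C * ‖g‖)
    (hv : inner ℝ e v = 1) (hTv : inner ℝ e (T v) = 1) :
    ‖T v‖ ^ 2 ≤ (‖e‖ ^ 2)⁻¹ + C ^ 2 * (‖v‖ ^ 2 - (‖e‖ ^ 2)⁻¹) := by
  have he : e ≠ 0 := by rintro rfl; simp at hv
  set g := v - (‖e‖ ^ 2)⁻¹ • e
  have hg : inner ℝ e g = 0 := by
    rw [inner_sub_right, real_inner_smul_right, real_inner_self_eq_norm_sq, hv,
      inv_mul_cancel₀ (by positivity), sub_self]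
  have hTg : T g = T v - (‖e‖ ^ 2)⁻¹ • e := by rw [map_sub, map_smul, hTe]
  calc ‖T v‖ ^ 2 = ‖T g‖ ^ 2 + (‖e‖ ^ 2)⁻¹ := by
        rw [hTg, ← norm_sq_eq_norm_sub_smul_sq_add_inv hTv]
    _ ≤ (C * ‖g‖) ^ 2 + (‖e‖ ^ 2)⁻¹ := by gcongr; exact hT g hg
    _ = (‖e‖ ^ 2)⁻¹ + C ^ 2 * (‖v‖ ^ 2 - (‖e‖ ^ 2)⁻¹) := by
        rw [norm_sq_eq_norm_sub_smul_sq_add_inv hv]; ring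

end InnerProductSpace

namespace MeasureTheory.L2

variable {α : Type*} [MeasurableSpace α] {μ : Measure α}

lemma norm_sq_indicatorConstLp {s : Set α} (hs : MeasurableSet s) (hμs : μ s ≠ ⊤) (c : ℝ) :
    ‖indicatorConstLp 2 hs hμs c‖ ^ 2 = μ.real s * c ^ 2 := by
  rw [← real_inner_self_eq_norm_sq, inner_indicatorConstLp_indicatorConstLp, Set.inter_self,
    smul_eq_mul, real_inner_self_eq_norm_sq, Real.norm_eq_abs, sq_abs]

lemma integral_eq_inner_const_one [IsFiniteMeasure μ] (f : Lp ℝ 2 μ) :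
    ∫ x, f x ∂μ = inner ℝ (Lp.const 2 μ (1 : ℝ)) f := by
  rw [← indicatorConstLp_univ, inner_indicatorConstLp_one, Measure.restrict_univ]

lemma sq_integral_le_norm_sq_mul_measureReal {s : Set α} (hs : MeasurableSet s)
    (hμs : μ s ≠ ⊤) (f : Lp ℝ 2 μ) (hf : ∀ᵐ x ∂μ, x ∉ s → f x = 0) :
    (∫ x, f x ∂μ) ^ 2 ≤ ‖f‖ ^ 2 * μ.real s := by
  have hχ := norm_sq_indicatorConstLp hs hμs 1
  rw [one_pow, mul_one] at hχ
  rw [← setIntegral_eq_integral_of_ae_compl_eq_zero hf, ← inner_indicatorConstLp_one hs hμs,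
    ← hχ, mul_comm, ← mul_pow]
  exact sq_le_sq' (neg_le_of_abs_le (abs_real_inner_le_norm _ _)) (real_inner_le_norm _ _)

end MeasureTheory.L2

lemma div_div_le_div_of_one_le_mul {y z m κ : ℝ} (hy : 0 < y) (hym : y ≤ m) (hκ : 0 ≤ κ)
    (h : 1 ≤ (m⁻¹ + κ * (y⁻¹ - m⁻¹)) * z) :
    y / m / (κ * (1 - y / m) + y / m) ≤ z / m := by
  have hm : 0 < m := hy.trans_le hym
  have hden : 0 < κ * (1 - y / m) + y / m := by
    have : y / m ≤ 1 := (div_le_one hm).mpr hym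
    have : 0 < y / m := by positivity
    nlinarith
  rw [div_right_comm, div_le_div_iff_of_pos_right hm, div_le_iff₀ hden]
  calc y ≤ y * ((m⁻¹ + κ * (y⁻¹ - m⁻¹)) * z) := le_mul_of_one_le_right hy.le h
    _ = z * (κ * (1 - y / m) + y / m) := by field_simp; ring

theorem isoperimetric_of_spectral_bound_general
    {X : Type*} [MeasurableSpace X] (μ : Measure X) [IsFiniteMeasure μ]
    (Y Z : Set X) (hY : MeasurableSet Y) (hZ : MeasurableSet Z)
    (hYpos : 0 < μ Y) (κ : ℝ) (hκ : 0 < κ)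
    (bY : X → ℝ) (hbYdef : bY = Set.indicator Y fun _ => ((μ Y).toReal)⁻¹)
    (hbY : MemLp bY 2 μ)
    (T : Lp ℝ 2 μ →ₗ[ℝ] Lp ℝ 2 μ)
    (hT1 : T (MemLp.toLp (fun _ : X => (1:ℝ)) (memLp_const 1)) =
      MemLp.toLp (fun _ : X => (1:ℝ)) (memLp_const 1))
    (hTnorm : ∀ g : Lp ℝ 2 μ, (∫ x, g x ∂μ) = 0 → ‖T g‖ ≤ Real.sqrt κ * ‖g‖)
    (hTsupp : ∀ᵐ x ∂μ, x ∉ Z → (T (MemLp.toLp bY hbY)) x = 0)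
    (hTint : (∫ x, (T (MemLp.toLp bY hbY)) x ∂μ) = 1) :
    (μ Y).toReal / (μ Set.univ).toReal /
        (κ * (1 - (μ Y).toReal / (μ Set.univ).toReal) +
          (μ Y).toReal / (μ Set.univ).toReal) ≤
      (μ Z).toReal / (μ Set.univ).toReal := by
  have hb : MemLp.toLp bY hbY = indicatorConstLp 2 hY (measure_ne_top μ Y) (μ.real Y)⁻¹ := by
    subst hbYdef; rfl
  have hy : 0 < μ.real Y := ENNReal.toReal_pos hYpos.ne' (measure_ne_top μ Y)
  have he : ‖Lp.const 2 μ (1 : ℝ)‖ ^ 2 = μ.real Set.univ := by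
    rw [← indicatorConstLp_univ, L2.norm_sq_indicatorConstLp, one_pow, mul_one]
  have hb_norm : ‖MemLp.toLp bY hbY‖ ^ 2 = (μ.real Y)⁻¹ := by
    rw [hb, L2.norm_sq_indicatorConstLp]; field_simp
  have hb_inner : inner ℝ (Lp.const 2 μ (1 : ℝ)) (MemLp.toLp bY hbY) = 1 := by
    rw [← L2.integral_eq_inner_const_one, hb, integral_indicatorConstLp, smul_eq_mul,
      mul_inv_cancel₀ hy.ne']
  rw [MemLp.toLp_const] at hT1
  have hTb_norm := norm_sq_apply_le_of_inner_eq_one T hT1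
    (fun g hg ↦ hTnorm g (by rwa [L2.integral_eq_inner_const_one]))
    hb_inner (by rw [← L2.integral_eq_inner_const_one, hTint])
  rw [he, hb_norm, Real.sq_sqrt hκ.le] at hTb_norm
  have hCS := L2.sq_integral_le_norm_sq_mul_measureReal hZ (measure_ne_top μ Z) _ hTsupp
  rw [hTint, one_pow] at hCS
  exact div_div_le_div_of_one_le_mul hy (measureReal_mono (Set.subset_univ Y)) hκ.le
    (hCS.trans (mul_le_mul_of_nonneg_right hTb_norm measureReal_nonneg))

/-- Isoperimetric inequality from a spectral gap: let `(X, μ)` be a finite measure space,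
`Y ⊆ Z` measurable with `μ(Y) > 0`, `κ > 0`, and `b_Y = μ(Y)⁻¹·𝟙_Y`. Suppose the linear
operator `T` on `L²(μ)` fixes the constant function `1`, satisfies `‖Tg‖₂ ≤ √κ·‖g‖₂` on
mean-zero `g`, and `T b_Y` is a.e. nonnegative, vanishes a.e. outside `Z`, and has total
integral `1`. Then, with `c = μ(Y)/μ(X)`, one has `μ(Z)/μ(X) ≥ c/(κ(1 − c) + c)`. -/
theorem isoperimetric_of_spectral_bound
    {X : Type*} [MeasurableSpace X] (μ : Measure X) [IsFiniteMeasure μ]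
    (Y Z : Set X) (hY : MeasurableSet Y) (hZ : MeasurableSet Z) (hYZ : Y ⊆ Z)
    (hYpos : 0 < μ Y) (κ : ℝ) (hκ : 0 < κ)
    (bY : X → ℝ) (hbYdef : bY = Set.indicator Y fun _ => ((μ Y).toReal)⁻¹)
    (hbY : MemLp bY 2 μ)
    (T : Lp ℝ 2 μ →ₗ[ℝ] Lp ℝ 2 μ)
    (hT1 : T (MemLp.toLp (fun _ : X => (1:ℝ)) (memLp_const 1)) =
      MemLp.toLp (fun _ : X => (1:ℝ)) (memLp_const 1))
    (hTnorm : ∀ g : Lp ℝ 2 μ, (∫ x, g x ∂μ) = 0 → ‖T g‖ ≤ Real.sqrt κ * ‖g‖)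
    (hTpos : 0 ≤ᵐ[μ] ⇑(T (MemLp.toLp bY hbY)))
    (hTsupp : ∀ᵐ x ∂μ, x ∉ Z → (T (MemLp.toLp bY hbY)) x = 0)
    (hTint : (∫ x, (T (MemLp.toLp bY hbY)) x ∂μ) = 1) :
    (μ Y).toReal / (μ Set.univ).toReal /
        (κ * (1 - (μ Y).toReal / (μ Set.univ).toReal) +
          (μ Y).toReal / (μ Set.univ).toReal) ≤
      (μ Z).toReal / (μ Set.univ).toReal :=
  isoperimetric_of_spectral_bound_general μ Y Z hY hZ hYpos κ hκ bY hbYdef hbY T hT1 hTnorm hTsupp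
    hTint
end
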